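/- arXiv:1806.07404 — 5 statements merged into one kernel-verified Lean document; each statement's English description precedes it below -/
import Mathlib

section
/- There exists an absolute constant c > 0 with the following property. Let 0 < δ < 1, let 0 < ε < 1, let n ≥ 1, and let p(z) = a_0 + a_1 z + ... + a_n z^n and q(z) = b_0 + b_1 z + ... + b_n z^n be nonzero complex polynomials of degree at most n such that every root z of p and every root z of q satisfies Re z ≤ -δ. If a_k = b_k for every integer k with 0 ≤ k ≤ (c/δ)·ln(n/(εδ)), then there exists w ∈ ℂ with e^w = p(1)/q(1) and |w| ≤ ε. -/
/-!
Normalise `F = log (p / q)` by `F 0 = 0`, which is possible because `p 0 = q 0`; the branch is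
`rootLogSum p - rootLogSum q`, a sum of principal logarithms over the roots. On the half-plane
`Re z > -δ/2` its derivative `p'/p - q'/q` is bounded by `4n/δ`, and it vanishes to order `K` at
`0` because the Wronskian `p'q - pq'` is divisible by `X ^ K`. Pulling back to the unit disc by
`u ↦ δu/(1 - u)` and applying the maximum principle to the quotient by `u ^ K` (Schwarz's lemma)
bounds it on `[0, 1]` by `4n/δ · (1 - δ/4) ^ K`, so `|F 1| ≤ ε` once `K ≥ (4/δ) log (4n/(εδ))`.

When `log (n/(εδ))` is too small to give any such `K`, only `p 0 = q 0` is known; but then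
`n = 1` and `δ`, `ε` are close to `1`, so `p 1 / p 0` and `q 1 / q 0` lie in the disc of radius
`1/(2δ)` about `1 + 1/(2δ)`, on which the logarithm of a quotient is small.
-/

open Polynomial Complex

theorem HasDerivAt.multiset_sum_map {𝕜 F ι : Type*} [NontriviallyNormedField 𝕜]
    [NormedAddCommGroup F] [NormedSpace 𝕜 F] {s : Multiset ι} {f : ι → 𝕜 → F} {f' : ι → F}
    {x : 𝕜} (h : ∀ i ∈ s, HasDerivAt (f i) (f' i) x) :
    HasDerivAt (fun y => (s.map fun i => f i y).sum) (s.map f').sum x := by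
  induction s using Multiset.induction_on with
  | empty => simpa using hasDerivAt_const x (0 : F)
  | cons a s ih =>
    simp only [Multiset.map_cons, Multiset.sum_cons]
    exact (h a (Multiset.mem_cons_self a s)).add
      (ih fun i hi => h i (Multiset.mem_cons_of_mem hi))

/-- A branch of `log (p z / p 0)` on the half-plane to the right of `0` and of the roots of `p`. -/
noncomputable def rootLogSum (p : ℂ[X]) (z : ℂ) : ℂ :=
  (p.roots.map fun r => log (z - r) - log (-r)).sum

section RootLogSum

variable {p : ℂ[X]} {z : ℂ}

theorem rootLogSum_zero (p : ℂ[X]) : rootLogSum p 0 = 0 := by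
  simp [rootLogSum]

theorem exp_rootLogSum_mul_eval_zero (h0 : ∀ r ∈ p.roots, r.re < 0)
    (hz : ∀ r ∈ p.roots, r.re < z.re) : exp (rootLogSum p z) * p.eval 0 = p.eval z := by
  have hfactor : ∀ r ∈ p.roots, exp (log (z - r) - log (-r)) * (0 - r) = z - r := by
    intro r hr
    have hzr : z - r ≠ 0 := fun h => by
      have := congrArg re h; simp at this; linarith [hz r hr]
    have hr0 : -r ≠ 0 := fun h => by
      have := congrArg re h; simp at this; linarith [h0 r hr]
    rw [exp_sub, exp_log hzr, exp_log hr0, zero_sub, div_mul_cancel₀ _ hr0]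
  have hsplit := IsAlgClosed.splits p
  rw [hsplit.eval_eq_prod_roots, hsplit.eval_eq_prod_roots, rootLogSum, exp_multiset_sum,
    Multiset.map_map, mul_left_comm, ← Multiset.prod_map_mul]
  exact congrArg _ (congrArg _ (Multiset.map_congr rfl hfactor))

theorem hasDerivAt_rootLogSum (hz : ∀ r ∈ p.roots, r.re < z.re) (hpz : p.eval z ≠ 0) :
    HasDerivAt (rootLogSum p) (p.derivative.eval z / p.eval z) z := by
  rw [(IsAlgClosed.splits p).eval_derivative_div_eval_of_ne_zero hpz]
  refine HasDerivAt.multiset_sum_map fun r hr => ?_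
  have hre : 0 < (z - r).re := by simp; linarith [hz r hr]
  simpa using (((hasDerivAt_id z).sub_const r).clog (mem_slitPlane_iff.2 (.inl hre))).sub_const
    (log (-r))

theorem norm_eval_derivative_div_eval_le {η : ℝ} (hη : 0 < η)
    (hz : ∀ r ∈ p.roots, η ≤ z.re - r.re) (hpz : p.eval z ≠ 0) :
    ‖p.derivative.eval z / p.eval z‖ ≤ p.natDegree / η := by
  rw [(IsAlgClosed.splits p).eval_derivative_div_eval_of_ne_zero hpz]
  have hterm : ∀ x ∈ p.roots.map fun r => ‖1 / (z - r)‖, x ≤ 1 / η := by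
    simp only [Multiset.mem_map]
    rintro _ ⟨r, hr, rfl⟩
    rw [norm_div, norm_one]
    exact one_div_le_one_div_of_le hη ((hz r hr).trans ((sub_re z r).symm.trans_le (re_le_norm _)))
  calc _ ≤ (p.roots.map fun r => ‖1 / (z - r)‖).sum := by
        simpa [Multiset.map_map] using norm_multiset_sum_le (p.roots.map fun r => 1 / (z - r))
    _ ≤ Multiset.card p.roots • (1 / η) := by
        simpa using Multiset.sum_le_card_nsmul _ _ hterm
    _ ≤ p.natDegree / η := by
        rw [nsmul_eq_mul, mul_one_div]
        gcongr
        exact_mod_cast card_roots' p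

theorem norm_eval_derivative_div_eval_le_of_re_le {δ : ℝ} {n : ℕ} (hδ : 0 < δ)
    (hpd : p.natDegree ≤ n) (hroot : ∀ w : ℂ, p.eval w = 0 → w.re ≤ -δ) (hz : -δ / 2 < z.re) :
    ‖p.derivative.eval z / p.eval z‖ ≤ 2 * n / δ := by
  have hpn : (p.natDegree : ℝ) ≤ n := by exact_mod_cast hpd
  calc _ ≤ p.natDegree / (δ / 2) := norm_eval_derivative_div_eval_le (by positivity)
        (fun r hr => by linarith [hroot r (isRoot_of_mem_roots hr)])
        (fun h => by linarith [hroot z h])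
    _ ≤ n / (δ / 2) := by gcongr
    _ = 2 * n / δ := by ring

end RootLogSum

theorem X_pow_dvd_derivative_mul_sub_mul_derivative {R : Type*} [CommRing R] {p q : R[X]} {K : ℕ}
    (h : ∀ k ≤ K, p.coeff k = q.coeff k) : X ^ K ∣ derivative p * q - p * derivative q := by
  have hdiff : X ^ (K + 1) ∣ p - q := X_pow_dvd_iff.2 fun k hk => by
    rw [coeff_sub, h k (Nat.lt_succ_iff.1 hk), sub_self]
  have hder : X ^ K ∣ derivative (p - q) := by
    simpa using pow_sub_one_dvd_derivative_of_pow_dvd hdiff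
  have hwronsk : derivative p * q - p * derivative q
      = derivative (p - q) * q - (p - q) * derivative q := by
    rw [derivative_sub]; ring
  rw [hwronsk]
  exact dvd_sub (hder.mul_right q) (((pow_dvd_pow X K.le_succ).trans hdiff).mul_right _)

theorem norm_pow_mul_le_of_norm_eq_radius {g : ℂ → ℂ} {K : ℕ} {ρ M : ℝ} (hρ : 0 < ρ)
    (hg : DiffContOnCl ℂ g (Metric.ball 0 ρ)) (hM : ∀ v : ℂ, ‖v‖ = ρ → ‖v ^ K * g v‖ ≤ M)
    {u : ℂ} (hu : ‖u‖ ≤ ρ) : ‖u ^ K * g u‖ ≤ M * (‖u‖ / ρ) ^ K := by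
  have hg_le : ‖g u‖ ≤ M / ρ ^ K := by
    refine Complex.norm_le_of_forall_mem_frontier_norm_le Metric.isBounded_ball hg
      (fun v hv => ?_) (by rwa [closure_ball 0 hρ.ne', mem_closedBall_zero_iff])
    rw [frontier_ball 0 hρ.ne', mem_sphere_zero_iff_norm] at hv
    have := hM v hv
    rw [norm_mul, norm_pow, hv] at this
    rwa [le_div_iff₀' (by positivity)]
  calc ‖u ^ K * g u‖ = ‖u‖ ^ K * ‖g u‖ := by rw [norm_mul, norm_pow]
    _ ≤ ‖u‖ ^ K * (M / ρ ^ K) := by gcongr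
    _ = M * (‖u‖ / ρ) ^ K := by rw [div_pow]; ring

theorem neg_half_lt_re_mul_div_one_sub {δ : ℝ} (hδ : 0 < δ) {u : ℂ} (hu : ‖u‖ < 1) :
    -δ / 2 < (u * (δ / (1 - u))).re := by
  have hu1 : 1 - u ≠ 0 := sub_ne_zero.2 fun h => by simp [← h] at hu
  have hN : 0 < normSq (1 - u) := normSq_pos.2 hu1
  have hu2 : u.re ^ 2 + u.im ^ 2 < 1 := by
    have := Complex.sq_norm u
    rw [normSq_apply] at this
    nlinarith [norm_nonneg u]
  rw [show u * (δ / (1 - u)) = δ * (u / (1 - u)) by ring, re_ofReal_mul, div_re, ← add_div,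
    mul_div_assoc', lt_div_iff₀ hN]
  rw [normSq_apply] at hN ⊢
  simp only [sub_re, one_re, sub_im, one_im] at hN ⊢
  nlinarith

theorem norm_pow_mul_le_of_halfPlane {g : ℂ → ℂ} {K : ℕ} {δ M : ℝ} (hδ : 0 < δ)
    (hg : DifferentiableOn ℂ g {z | -δ / 2 < z.re})
    (hM : ∀ z : ℂ, -δ / 2 < z.re → ‖z ^ K * g z‖ ≤ M) {t : ℝ} (ht0 : 0 ≤ t) (ht1 : t ≤ 1) :
    ‖(t : ℂ) ^ K * g t‖ ≤ M * ((1 + δ / 2) / (1 + δ)) ^ K := by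
  set ψ : ℂ → ℂ := fun u => u * (δ / (1 - u))
  set B : ℂ → ℂ := fun u => (δ / (1 - u)) ^ K * g (ψ u)
  have hψB : ∀ u, u ^ K * B u = ψ u ^ K * g (ψ u) := fun u => by simp only [ψ, B]; ring
  have hB : DifferentiableOn ℂ B (Metric.ball 0 1) := by
    intro u hu
    have hu1 : 1 - u ≠ 0 := sub_ne_zero.2 fun h => by simp [← h] at hu
    have hgψ : DifferentiableAt ℂ g (ψ u) :=
      hg.differentiableAt ((isOpen_lt continuous_const continuous_re).mem_nhds
        (neg_half_lt_re_mul_div_one_sub hδ (mem_ball_zero_iff.1 hu)))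
    have hψ : DifferentiableAt ℂ ψ u := by fun_prop (disch := exact hu1)
    have hfactor : DifferentiableAt ℂ (fun u : ℂ => (δ / (1 - u)) ^ K) u := by
      fun_prop (disch := exact hu1)
    exact (hfactor.mul (hgψ.comp u hψ)).differentiableWithinAt
  set ρ : ℝ := 1 / (1 + δ / 2)
  have hρ0 : 0 < ρ := by positivity
  have hρ1 : ρ < 1 := by rw [div_lt_one (by positivity)]; linarith
  set u : ℂ := ((t / (t + δ) : ℝ) : ℂ)
  have htδ : (t : ℂ) + δ ≠ 0 := by exact_mod_cast (by positivity : t + δ ≠ 0)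
  have hδc : (δ : ℂ) ≠ 0 := by exact_mod_cast hδ.ne'
  have hψu : ψ u = t := by
    simp only [ψ, u]
    push_cast
    rw [one_sub_div htδ, add_sub_cancel_left, div_div_cancel₀ hδc, div_mul_cancel₀ _ htδ]
  have hnorm : ‖u‖ = t / (t + δ) := by
    simp only [u, norm_real, Real.norm_eq_abs, abs_of_nonneg (by positivity : 0 ≤ t / (t + δ))]
  have hu : ‖u‖ / ρ ≤ (1 + δ / 2) / (1 + δ) := by
    have ht : t / (t + δ) ≤ 1 / (1 + δ) := by
      rw [div_le_div_iff₀ (by positivity) (by positivity)]; nlinarith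
    calc ‖u‖ / ρ = t / (t + δ) * (1 + δ / 2) := by rw [hnorm, div_div_eq_mul_div, div_one]
      _ ≤ 1 / (1 + δ) * (1 + δ / 2) := by gcongr
      _ = (1 + δ / 2) / (1 + δ) := by ring
  have hM0 : 0 ≤ M := (norm_nonneg _).trans (hM 0 (by simp; linarith))
  calc ‖(t : ℂ) ^ K * g t‖ = ‖u ^ K * B u‖ := by rw [hψB, hψu]
    _ ≤ M * (‖u‖ / ρ) ^ K := by
      refine norm_pow_mul_le_of_norm_eq_radius hρ0
        (hB.diffContOnCl_ball (Metric.closedBall_subset_ball hρ1)) (fun v hv => ?_) ?_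
      · rw [hψB]
        exact hM _ (neg_half_lt_re_mul_div_one_sub hδ (hv ▸ hρ1))
      · have : (1 + δ / 2) / (1 + δ) ≤ 1 := by rw [div_le_one (by positivity)]; linarith
        exact (div_le_one hρ0).1 (hu.trans this)
    _ ≤ M * ((1 + δ / 2) / (1 + δ)) ^ K := by gcongr

theorem norm_rootLogSum_sub_rootLogSum_le {δ : ℝ} {n K : ℕ} {p q : ℂ[X]} (hδ : 0 < δ)
    (hpd : p.natDegree ≤ n) (hqd : q.natDegree ≤ n)
    (hproot : ∀ z : ℂ, p.eval z = 0 → z.re ≤ -δ) (hqroot : ∀ z : ℂ, q.eval z = 0 → z.re ≤ -δ)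
    (hK : X ^ K ∣ derivative p * q - p * derivative q) :
    ‖rootLogSum p 1 - rootLogSum q 1‖ ≤ 4 * n / δ * ((1 + δ / 2) / (1 + δ)) ^ K := by
  obtain ⟨d, hd⟩ := hK
  set H : Set ℂ := {z | -δ / 2 < z.re}
  set S : ℂ → ℂ := fun z => p.derivative.eval z / p.eval z - q.derivative.eval z / q.eval z
  set g : ℂ → ℂ := fun z => d.eval z / (p.eval z * q.eval z)
  have heval : ∀ {f : ℂ[X]}, (∀ z : ℂ, f.eval z = 0 → z.re ≤ -δ) → ∀ z ∈ H, f.eval z ≠ 0 :=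
    fun hf z hz h => by linarith [hf z h, hz.out]
  have hright : ∀ {f : ℂ[X]}, (∀ z : ℂ, f.eval z = 0 → z.re ≤ -δ) →
      ∀ z ∈ H, ∀ r ∈ f.roots, r.re < z.re :=
    fun hf z hz r hr => by linarith [hf r (isRoot_of_mem_roots hr), hz.out]
  have hderiv : ∀ z ∈ H, HasDerivAt (fun z => rootLogSum p z - rootLogSum q z) (S z) z :=
    fun z hz => (hasDerivAt_rootLogSum (hright hproot z hz) (heval hproot z hz)).sub
      (hasDerivAt_rootLogSum (hright hqroot z hz) (heval hqroot z hz))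
  have hS : ∀ z ∈ H, S z = z ^ K * g z := by
    intro z hz
    have := congrArg (eval z) hd
    simp only [eval_sub, eval_mul, eval_pow, eval_X] at this
    simp only [S, g]
    rw [← mul_div_assoc, ← this]
    field_simp [heval hproot z hz, heval hqroot z hz]
  have hS_le : ∀ z ∈ H, ‖S z‖ ≤ 4 * n / δ := fun z hz =>
    calc ‖S z‖ ≤ 2 * n / δ + 2 * n / δ := (norm_sub_le _ _).trans (add_le_add
          (norm_eval_derivative_div_eval_le_of_re_le hδ hpd hproot hz)
          (norm_eval_derivative_div_eval_le_of_re_le hδ hqd hqroot hz))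
      _ = 4 * n / δ := by ring
  have hg : DifferentiableOn ℂ g H :=
    fun z hz => (d.differentiableAt.div (p.differentiableAt.mul q.differentiableAt)
      (mul_ne_zero (heval hproot z hz) (heval hqroot z hz))).differentiableWithinAt
  have hH : ∀ t ∈ Set.Icc (0 : ℝ) 1, (t : ℂ) ∈ H := fun t ht => by
    change -δ / 2 < (t : ℂ).re; rw [ofReal_re]; linarith [ht.1]
  have hS01 : ∀ t ∈ Set.Icc (0 : ℝ) 1, ‖S t‖ ≤ 4 * n / δ * ((1 + δ / 2) / (1 + δ)) ^ K := by
    intro t ht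
    rw [hS t (hH t ht)]
    exact norm_pow_mul_le_of_halfPlane hδ hg (fun z hz => hS z hz ▸ hS_le z hz) ht.1 ht.2
  simpa [rootLogSum_zero] using norm_image_sub_le_of_norm_deriv_le_segment_01'
    (f := fun t : ℝ => rootLogSum p t - rootLogSum q t)
    (fun t ht => (hderiv t (hH t ht)).comp_ofReal.hasDerivWithinAt)
    (fun t ht => hS01 t (Set.Ico_subset_Icc_self ht))

theorem div_pow_le_of_log_inv_le {δ η : ℝ} {K : ℕ} (hδ0 : 0 < δ) (hδ1 : δ ≤ 1) (hη : 0 < η)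
    (hK : 4 / δ * Real.log η⁻¹ ≤ K) : ((1 + δ / 2) / (1 + δ)) ^ K ≤ η := by
  have hbase : (1 + δ / 2) / (1 + δ) ≤ Real.exp (-(δ / 4)) :=
    calc (1 + δ / 2) / (1 + δ) ≤ 1 - δ / 4 := by rw [div_le_iff₀ (by positivity)]; nlinarith
      _ ≤ Real.exp (-(δ / 4)) := by linarith [Real.add_one_le_exp (-(δ / 4))]
  have hexp : -Real.log η⁻¹ ≥ -(δ / 4 * K) := by
    have := mul_le_mul_of_nonneg_left hK (by positivity : (0 : ℝ) ≤ δ / 4)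
    rw [← mul_assoc, div_mul_div_comm, mul_comm δ 4, div_self (by positivity), one_mul] at this
    linarith
  calc ((1 + δ / 2) / (1 + δ)) ^ K ≤ Real.exp (-(δ / 4)) ^ K := by gcongr
    _ = Real.exp (-(δ / 4 * K)) := by rw [← Real.exp_nat_mul]; ring_nf
    _ ≤ Real.exp (-Real.log η⁻¹) := Real.exp_le_exp.2 hexp
    _ = η := by rw [Real.exp_neg, Real.exp_log (inv_pos.2 hη), inv_inv]

theorem exists_exp_eq_eval_div_eval_of_coeff_eq {δ ε : ℝ} {n K : ℕ} {p q : ℂ[X]} (hδ0 : 0 < δ)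
    (hδ1 : δ ≤ 1) (hε : 0 < ε) (hn : 0 < n) (hpd : p.natDegree ≤ n) (hqd : q.natDegree ≤ n)
    (hproot : ∀ z : ℂ, p.eval z = 0 → z.re ≤ -δ) (hqroot : ∀ z : ℂ, q.eval z = 0 → z.re ≤ -δ)
    (hcoeff : ∀ k ≤ K, p.coeff k = q.coeff k) (hK : 4 / δ * Real.log (4 * n / (ε * δ)) ≤ K) :
    ∃ w : ℂ, exp w = p.eval 1 / q.eval 1 ∧ ‖w‖ ≤ ε := by
  have hroots : ∀ {f : ℂ[X]}, (∀ z : ℂ, f.eval z = 0 → z.re ≤ -δ) → ∀ r ∈ f.roots, r.re < 0 :=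
    fun hf r hr => by linarith [hf r (isRoot_of_mem_roots hr)]
  have hexp : ∀ {f : ℂ[X]}, (∀ z : ℂ, f.eval z = 0 → z.re ≤ -δ) →
      exp (rootLogSum f 1) * f.eval 0 = f.eval 1 := fun hf =>
    exp_rootLogSum_mul_eval_zero (hroots hf) fun r hr => by
      rw [one_re]; linarith [hroots hf r hr]
  have hq1 : q.eval 1 ≠ 0 := fun h => by linarith [hqroot 1 h, one_re]
  have h0 : p.eval 0 = q.eval 0 := by simpa [coeff_zero_eq_eval_zero] using hcoeff 0 K.zero_le
  refine ⟨rootLogSum p 1 - rootLogSum q 1, ?_, ?_⟩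
  · rw [exp_sub, div_eq_div_iff (exp_ne_zero _) hq1, ← hexp hproot, ← hexp hqroot, h0]
    ring
  · have hn' : (0 : ℝ) < n := by exact_mod_cast hn
    have hpow := div_pow_le_of_log_inv_le (η := ε * δ / (4 * n)) hδ0 hδ1 (by positivity)
      (by rwa [inv_div])
    calc _ ≤ 4 * n / δ * ((1 + δ / 2) / (1 + δ)) ^ K := norm_rootLogSum_sub_rootLogSum_le hδ0
          hpd hqd hproot hqroot (X_pow_dvd_derivative_mul_sub_mul_derivative hcoeff)
      _ ≤ 4 * n / δ * (ε * δ / (4 * n)) := by gcongr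
      _ = ε := by field_simp

theorem norm_log_div_le {c x : ℂ} {ρ : ℝ} (hρ : ρ < 1) (hc : c ≠ 0) (hx : ‖x - c‖ ≤ ρ * ‖c‖) :
    ‖log (x / c)‖ ≤ ρ ^ 2 * (1 - ρ)⁻¹ / 2 + ρ := by
  have hz : ‖x / c - 1‖ ≤ ρ := by
    rwa [div_sub_one hc, norm_div, div_le_iff₀ (norm_pos_iff.2 hc)]
  have hρ' : 0 < 1 - ρ := by linarith
  calc ‖log (x / c)‖ = ‖log (1 + (x / c - 1))‖ := by ring_nf
    _ ≤ ‖x / c - 1‖ ^ 2 * (1 - ‖x / c - 1‖)⁻¹ / 2 + ‖x / c - 1‖ :=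
      norm_log_one_add_le (hz.trans_lt hρ)
    _ ≤ ρ ^ 2 * (1 - ρ)⁻¹ / 2 + ρ := by
      have : 0 < 1 - ‖x / c - 1‖ := by linarith
      gcongr

theorem exists_exp_eq_div_of_norm_sub_le {c x y : ℂ} {ρ : ℝ} (hρ : ρ < 1) (hc : c ≠ 0)
    (hx : ‖x - c‖ ≤ ρ * ‖c‖) (hy : ‖y - c‖ ≤ ρ * ‖c‖) :
    ∃ w : ℂ, exp w = x / y ∧ ‖w‖ ≤ ρ ^ 2 * (1 - ρ)⁻¹ + 2 * ρ := by
  have hne : ∀ {v : ℂ}, ‖v - c‖ ≤ ρ * ‖c‖ → v / c ≠ 0 := fun hv h => by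
    rw [div_eq_zero_iff, or_iff_left hc] at h
    subst h
    have := norm_pos_iff.2 hc
    rw [zero_sub, norm_neg] at hv
    nlinarith
  refine ⟨log (x / c) - log (y / c), ?_, ?_⟩
  · rw [exp_sub, exp_log (hne hx), exp_log (hne hy), div_div_div_cancel_right₀ hc]
  · linarith [norm_sub_le (log (x / c)) (log (y / c)), norm_log_div_le hρ hc hx,
      norm_log_div_le hρ hc hy]

theorem norm_two_mul_eval_one_div_eval_zero_sub_le {δ : ℝ} {p : ℂ[X]} (hδ : 0 ≤ δ)
    (hpd : p.natDegree ≤ 1) (hroot : ∀ z : ℂ, p.eval z = 0 → z.re ≤ -δ) (hp0 : p.eval 0 ≠ 0) :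
    ‖2 * δ * (p.eval 1 / p.eval 0) - (2 * δ + 1)‖ ≤ 1 := by
  obtain ⟨a, b, rfl⟩ := exists_eq_X_add_C_of_natDegree_le_one hpd
  simp only [eval_add, eval_mul, eval_C, eval_X, mul_zero, zero_add, mul_one] at hp0 hroot ⊢
  rcases eq_or_ne a 0 with rfl | ha
  · simp [hp0]
  set r := -b / a
  have hr0 : r ≠ 0 := div_ne_zero (neg_ne_zero.2 hp0) ha
  have hr : r.re ≤ -δ := hroot r (by simp only [r]; field_simp; ring)
  -- `p 1 / p 0 = 1 - 1 / r`, and `‖r + 2δ‖ ≤ ‖r‖` is exactly `Re r ≤ -δ`.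
  have hform : 2 * δ * ((a + b) / b) - (2 * δ + 1) = -((r + 2 * δ) / r) := by
    simp only [r]; field_simp; ring
  rw [hform, norm_neg, norm_div, div_le_one (norm_pos_iff.2 hr0),
    ← sq_le_sq₀ (norm_nonneg _) (norm_nonneg _), Complex.sq_norm, Complex.sq_norm, normSq_apply,
    normSq_apply]
  simp only [add_re, add_im, mul_re, mul_im, ofReal_re, ofReal_im, re_ofNat, im_ofNat]
  nlinarith

theorem exists_exp_eq_eval_div_eval_of_natDegree_le_one {δ : ℝ} {p q : ℂ[X]} (hδ : 5 / 6 ≤ δ)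
    (hpd : p.natDegree ≤ 1) (hqd : q.natDegree ≤ 1)
    (hproot : ∀ z : ℂ, p.eval z = 0 → z.re ≤ -δ) (hqroot : ∀ z : ℂ, q.eval z = 0 → z.re ≤ -δ)
    (h0 : p.coeff 0 = q.coeff 0) :
    ∃ w : ℂ, exp w = p.eval 1 / q.eval 1 ∧ ‖w‖ ≤ 39 / 40 := by
  have hp0 : p.eval 0 ≠ 0 := fun h => by linarith [hproot 0 h, zero_re]
  have hq0 : q.eval 0 ≠ 0 := fun h => by linarith [hqroot 0 h, zero_re]
  have hc : (2 * δ + 1 : ℂ) = ((2 * δ + 1 : ℝ) : ℂ) := by push_cast; ring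
  have hρ : (1 : ℝ) ≤ 3 / 8 * ‖(2 * δ + 1 : ℂ)‖ := by
    rw [hc, norm_real, Real.norm_of_nonneg (by linarith)]; linarith
  have hc0 : (2 * δ + 1 : ℂ) ≠ 0 := by rw [hc]; exact_mod_cast (by linarith : 2 * δ + 1 ≠ 0)
  obtain ⟨w, hw, hwn⟩ := exists_exp_eq_div_of_norm_sub_le (by norm_num) hc0
    ((norm_two_mul_eval_one_div_eval_zero_sub_le (by linarith) hpd hproot hp0).trans hρ)
    ((norm_two_mul_eval_one_div_eval_zero_sub_le (by linarith) hqd hqroot hq0).trans hρ)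
  refine ⟨w, ?_, hwn.trans (by norm_num)⟩
  have hδ2 : (2 * δ : ℂ) ≠ 0 := by exact_mod_cast (by linarith : 2 * δ ≠ 0)
  rw [hw, mul_div_mul_left _ _ hδ2, ← coeff_zero_eq_eval_zero, ← coeff_zero_eq_eval_zero, h0,
    div_div_div_cancel_right₀ (by rwa [coeff_zero_eq_eval_zero])]

theorem four_div_mul_log_four_mul_le_floor {δ x : ℝ} (hδ0 : 0 < δ) (hδ1 : δ ≤ 1) (hx : 0 < x)
    (hL : 1 / 40 ≤ Real.log x) : 4 / δ * Real.log (4 * x) ≤ ⌊1000 / δ * Real.log x⌋₊ := by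
  have hlog4 : Real.log 4 < 7 / 5 := by
    rw [show (4 : ℝ) = 2 ^ 2 by norm_num, Real.log_pow]
    linarith [Real.log_two_lt_d9]
  have hfloor := Nat.lt_floor_add_one (1000 / δ * Real.log x)
  suffices 4 / δ * Real.log (4 * x) ≤ 1000 / δ * Real.log x - 1 by linarith
  rw [Real.log_mul (by norm_num) hx.ne', div_mul_eq_mul_div, div_mul_eq_mul_div,
    le_sub_iff_add_le, div_add_one hδ0.ne', div_le_div_iff_of_pos_right hδ0]
  nlinarith

theorem eq_one_and_lt_of_log_div_lt {n : ℕ} {x : ℝ} (hn : 1 ≤ n) (hx0 : 0 < x) (hx1 : x ≤ 1)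
    (h : Real.log (n / x) < 1 / 40) : n = 1 ∧ 39 / 40 < x := by
  have hn' : (1 : ℝ) ≤ n := by exact_mod_cast hn
  have hlog := Real.one_sub_inv_le_log_of_pos (by positivity : (0 : ℝ) < n / x)
  rw [inv_div, sub_le_iff_le_add] at hlog
  have hxn : 39 / 40 < x / n := by linarith
  rw [lt_div_iff₀ (by positivity)] at hxn
  have hn2 : n < 2 := by exact_mod_cast (by linarith : (n : ℝ) < 2)
  exact ⟨by omega, by linarith⟩

/-- Theorem 1.4 (two-polynomial form): if all roots of the complex polynomials `p` and `q`
have real part `≤ -δ`, and `p` and `q` agree on all coefficients of index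
`k ≤ (c/δ)·ln(n/(εδ))`, then `p(1)/q(1)` is `e^w` for some `w` with `|w| ≤ ε`. -/
theorem stmt3 :
    ∃ c : ℝ, 0 < c ∧
      ∀ (δ ε : ℝ) (n : ℕ) (p q : Polynomial ℂ),
        0 < δ → δ < 1 → 0 < ε → ε < 1 → 1 ≤ n →
        p ≠ 0 → q ≠ 0 → p.natDegree ≤ n → q.natDegree ≤ n →
        (∀ z : ℂ, p.eval z = 0 → z.re ≤ -δ) →
        (∀ z : ℂ, q.eval z = 0 → z.re ≤ -δ) →
        (∀ k : ℕ, (k : ℝ) ≤ c / δ * Real.log (n / (ε * δ)) → p.coeff k = q.coeff k) →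
        ∃ w : ℂ, Complex.exp w = p.eval 1 / q.eval 1 ∧ ‖w‖ ≤ ε := by
  refine ⟨1000, by norm_num, ?_⟩
  intro δ ε n p q hδ0 hδ1 hε0 hε1 hn _ _ hpd hqd hproot hqroot hcoeff
  have hεδ : 0 < ε * δ := mul_pos hε0 hδ0
  rcases le_or_gt (1 / 40) (Real.log (n / (ε * δ))) with hL | hL
  · have hK := four_div_mul_log_four_mul_le_floor hδ0 hδ1.le (by positivity) hL
    rw [← mul_div_assoc] at hK
    refine exists_exp_eq_eval_div_eval_of_coeff_eq hδ0 hδ1.le hε0 hn hpd hqd hproot hqroot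
      (fun k hk => hcoeff k ?_) hK
    exact (Nat.cast_le.2 hk).trans (Nat.floor_le (mul_nonneg (by positivity) (by linarith)))
  · obtain ⟨rfl, hεδ'⟩ := eq_one_and_lt_of_log_div_lt hn hεδ (by nlinarith) hL
    have hlog : 0 ≤ Real.log (1 / (ε * δ)) :=
      Real.log_nonneg (by rw [le_div_iff₀ hεδ]; nlinarith)
    obtain ⟨w, hw, hwn⟩ := exists_exp_eq_eval_div_eval_of_natDegree_le_one (by nlinarith) hpd hqd
      hproot hqroot (hcoeff 0 (by push_cast; exact mul_nonneg (by positivity) hlog))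
    exact ⟨w, hw, hwn.trans (by nlinarith)⟩
end

section
/- There exists an absolute constant c > 0 with the following property. Let 0 < δ < 1, let 0 < ε < 1, let n ≥ 1, and let p(z) = a_0 + a_1 z + ... + a_n z^n and q(z) = b_0 + b_1 z + ... + b_n z^n be complex polynomials of degree at most n such that p(z) ≠ 0 and q(z) ≠ 0 for every z ∈ ℂ whose distance to the real segment [0,1] ⊂ ℂ is less than δ. If a_k = b_k for every integer k with 0 ≤ k ≤ e^{c/δ}·ln(n·e^{c/δ}/ε), then there exists w ∈ ℂ with e^w = p(1)/q(1) and |w| ≤ ε. -/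
/-!
The roots of `p` and `q` lie at distance `≥ δ` from `[0, 1]`, so on the `3δ/4`-neighbourhood `U`
of the segment the branches `log (1 - z / ζ)` over the roots give a holomorphic `g` with
`g 0 = 0` and `exp g = p / q` (recall `p 0 = q 0`). Its derivative `p'/p - q'/q` is `O(n/δ)` on
`U`, hence so is `g`; and since `p' q - p q'` is divisible by `z ^ K`, `g` is of size `e^{-K}`
near `0`. Cauchy estimates on two concentric circles turn a bound `m` on a small disc and the
global bound `M` into the bound `3 √(m M)` on a slightly larger disc; along a chain of
`⌈32/δ⌉` discs from `0` to `1` this halves the exponent `K` at each step, so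
`|g 1| ≤ (144 n / δ) exp (-K / 2 ^ ⌈32/δ⌉)`, which is at most `ε` once
`K + 1 > e^{150/δ} log (n e^{150/δ} / ε)`.
-/

open Complex Set Metric Polynomial
open scoped Nat

def segmentNhd (r : ℝ) : Set ℂ := thickening r (ofReal '' Icc 0 1)

section SegmentNhd

variable {r : ℝ}

lemma mem_segmentNhd {z : ℂ} : z ∈ segmentNhd r ↔ ∃ t ∈ Icc (0 : ℝ) 1, ‖z - t‖ < r := by
  simp [segmentNhd, mem_thickening_iff, dist_eq]

lemma convex_segmentNhd : Convex ℝ (segmentNhd r) :=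
  ((convex_Icc 0 1).linear_image ofRealLI.toLinearMap).thickening r

lemma segmentNhd_mono {r' : ℝ} (h : r' ≤ r) : segmentNhd r' ⊆ segmentNhd r :=
  thickening_mono h _

lemma closedBall_subset_segmentNhd {r' t : ℝ} (h : r' < r) (ht : t ∈ Icc (0 : ℝ) 1) :
    closedBall (t : ℂ) r' ⊆ segmentNhd r := fun _ hz =>
  mem_segmentNhd.2 ⟨t, ht, (mem_closedBall_iff_norm.1 hz).trans_lt h⟩

lemma ofReal_mem_segmentNhd (hr : 0 < r) {t : ℝ} (ht : t ∈ Icc (0 : ℝ) 1) :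
    (t : ℂ) ∈ segmentNhd r :=
  closedBall_subset_segmentNhd hr ht (mem_closedBall_self le_rfl)

lemma norm_le_of_mem_segmentNhd {z : ℂ} (hz : z ∈ segmentNhd r) : ‖z‖ ≤ 1 + r := by
  obtain ⟨t, ht, hzt⟩ := mem_segmentNhd.1 hz
  calc ‖z‖ ≤ ‖(t : ℂ)‖ + ‖z - t‖ := norm_le_insert' z t
    _ ≤ 1 + r := by
      rw [norm_real, Real.norm_of_nonneg ht.1]
      linarith [ht.2]

lemma le_norm_sub_of_mem_segmentNhd {s : ℝ} {z ζ : ℂ} (hz : z ∈ segmentNhd r)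
    (hζ : ζ ∉ segmentNhd (s + r)) : s ≤ ‖z - ζ‖ := by
  by_contra! h
  refine hζ (thickening_thickening_subset s r _ (mem_thickening_iff.2 ⟨z, hz, ?_⟩))
  rwa [dist_comm, dist_eq]

end SegmentNhd

noncomputable def rootLog (s : Multiset ℂ) (z : ℂ) : ℂ :=
  (s.map fun ζ => log (1 - z / ζ)).sum

section RootLog

variable {s : Multiset ℂ} {z : ℂ}

@[simp]
lemma rootLog_zero_right (s : Multiset ℂ) : rootLog s 0 = 0 := by
  simp [rootLog]

lemma exp_rootLog (h : ∀ ζ ∈ s, 1 - z / ζ ≠ 0) :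
    exp (rootLog s z) = (s.map fun ζ => 1 - z / ζ).prod := by
  rw [rootLog, exp_multiset_sum, Multiset.map_map]
  exact congrArg _ (Multiset.map_congr rfl fun ζ hζ => exp_log (h ζ hζ))

lemma hasDerivAt_rootLog (h : ∀ ζ ∈ s, ζ ≠ 0 ∧ 1 - z / ζ ∈ slitPlane) :
    HasDerivAt (rootLog s) (s.map fun ζ => 1 / (z - ζ)).sum z := by
  induction s using Multiset.induction_on with
  | empty =>
    have hzero : rootLog 0 = fun _ => 0 := by
      funext w
      simp [rootLog]
    simpa [hzero] using hasDerivAt_const z (0 : ℂ)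
  | cons ζ s ih =>
    obtain ⟨hζ0, hζ⟩ := h ζ (Multiset.mem_cons_self ζ s)
    have hlog : HasDerivAt (fun w => log (1 - w / ζ)) (1 / (z - ζ)) z := by
      have hζz : ζ - z ≠ 0 := by
        intro h0
        simp [← sub_eq_zero.1 h0, hζ0] at hζ
      refine ((((hasDerivAt_id' z).div_const ζ).const_sub 1).clog hζ).congr_deriv ?_
      field_simp
      rw [← neg_sub ζ z, div_neg, div_self hζz]
    have hrec : rootLog (ζ ::ₘ s) = fun w => log (1 - w / ζ) + rootLog s w := by
      funext w
      simp [rootLog]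
    rw [hrec, Multiset.map_cons, Multiset.sum_cons]
    exact hlog.add (ih fun ξ hξ => h ξ (Multiset.mem_cons_of_mem hξ))

lemma norm_sum_one_div_sub_le {r : ℝ} (hr : 0 < r) (h : ∀ ζ ∈ s, r ≤ ‖z - ζ‖) :
    ‖(s.map fun ζ => 1 / (z - ζ)).sum‖ ≤ Multiset.card s / r := by
  refine (norm_multiset_sum_le _).trans ?_
  rw [Multiset.map_map, div_eq_mul_one_div, ← nsmul_eq_mul,
    ← Multiset.card_map (fun ζ => ‖1 / (z - ζ)‖)]
  refine Multiset.sum_le_card_nsmul _ _ fun x hx => ?_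
  obtain ⟨ζ, hζ, rfl⟩ := Multiset.mem_map.1 hx
  simp only [Function.comp_apply, norm_div, norm_one]
  exact one_div_le_one_div_of_le hr (h ζ hζ)

end RootLog

lemma one_sub_div_mem_slitPlane {U : Set ℂ} {z ζ : ℂ} (hU : StarConvex ℝ 0 U) (hz : z ∈ U)
    (hζ : ζ ∉ U) : 1 - z / ζ ∈ slitPlane := by
  have hζ0 : ζ ≠ 0 := by
    rintro rfl
    exact hζ (hU.mem ⟨z, hz⟩)
  rw [mem_slitPlane_iff]
  by_contra! h
  have hre : 1 ≤ (z / ζ).re := by simpa using h.1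
  have hreal : z / ζ = ((z / ζ).re : ℂ) := by
    apply Complex.ext <;> simp_all
  apply hζ
  have hsmul : ζ = ((z / ζ).re)⁻¹ • z := by
    have hz0 : z ≠ 0 := by
      rintro rfl
      norm_num at hre
    rw [real_smul, ofReal_inv, ← hreal]
    field_simp
  rw [hsmul]
  exact hU.smul_mem hz (by positivity) (inv_le_one_of_one_le₀ hre)

namespace Polynomial

lemma X_pow_dvd_derivative_mul_sub_mul {R : Type*} [CommRing R] {p q : R[X]} {K : ℕ}
    (h : ∀ k ≤ K, p.coeff k = q.coeff k) : X ^ K ∣ derivative p * q - p * derivative q := by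
  have hdvd : X ^ (K + 1) ∣ p - q :=
    X_pow_dvd_iff.2 fun d hd => by rw [coeff_sub, h d (Nat.lt_succ_iff.1 hd), sub_self]
  have hderiv : X ^ K ∣ derivative (p - q) := by
    simpa using pow_sub_one_dvd_derivative_of_pow_dvd hdvd
  have hsplit : derivative p * q - p * derivative q
      = derivative (p - q) * q - (p - q) * derivative q := by
    rw [derivative_sub]
    ring
  rw [hsplit]
  exact dvd_sub (hderiv.mul_right q) (((pow_dvd_pow X K.le_succ).trans hdvd).mul_right _)

lemma eval_derivative_div_eval_sub_eq_pow_mul {𝕜 : Type*} [Field 𝕜] {p q h : 𝕜[X]} {K : ℕ}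
    (hh : derivative p * q - p * derivative q = X ^ K * h) {z : 𝕜} (hp : p.eval z ≠ 0)
    (hq : q.eval z ≠ 0) :
    (derivative p).eval z / p.eval z - (derivative q).eval z / q.eval z
      = z ^ K * (h.eval z / (p.eval z * q.eval z)) := by
  have hhz := congrArg (eval z) hh
  simp only [eval_sub, eval_mul, eval_pow, eval_X] at hhz
  field_simp
  linear_combination hhz

lemma Splits.eval_eq_eval_zero_mul_prod {K : Type*} [Field K] {p : K[X]} (hp : p.Splits)
    (hp0 : p.eval 0 ≠ 0) (z : K) :
    p.eval z = p.eval 0 * (p.roots.map fun ζ => 1 - z / ζ).prod := by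
  rw [hp.eval_eq_prod_roots z, hp.eval_eq_prod_roots 0, mul_assoc, ← Multiset.prod_map_mul]
  congr 2
  refine Multiset.map_congr rfl fun ζ hζ => ?_
  have hζ0 : ζ ≠ 0 := by
    rintro rfl
    exact hp0 (mem_roots'.1 hζ).2
  field_simp
  ring

variable {U : Set ℂ} {p : ℂ[X]} {z : ℂ}

lemma eval_eq_eval_zero_mul_exp_rootLog (hU : StarConvex ℝ 0 U)
    (hp : ∀ w ∈ U, p.eval w ≠ 0) (hz : z ∈ U) :
    p.eval z = p.eval 0 * exp (rootLog p.roots z) := by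
  have hroot : ∀ ζ ∈ p.roots, ζ ∉ U := fun ζ hζ hζU => hp ζ hζU (mem_roots'.1 hζ).2
  rw [exp_rootLog fun ζ hζ => slitPlane_ne_zero (one_sub_div_mem_slitPlane hU hz (hroot ζ hζ))]
  exact (IsAlgClosed.splits p).eval_eq_eval_zero_mul_prod (hp 0 (hU.mem ⟨z, hz⟩)) z

lemma hasDerivAt_rootLog_roots (hU : StarConvex ℝ 0 U)
    (hp : ∀ w ∈ U, p.eval w ≠ 0) (hz : z ∈ U) :
    HasDerivAt (rootLog p.roots) ((derivative p).eval z / p.eval z) z := by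
  rw [(IsAlgClosed.splits p).eval_derivative_div_eval_of_ne_zero (hp z hz)]
  refine hasDerivAt_rootLog fun ζ hζ => ⟨?_, one_sub_div_mem_slitPlane hU hz ?_⟩
  · rintro rfl
    exact hp 0 (hU.mem ⟨z, hz⟩) (mem_roots'.1 hζ).2
  · exact fun hζU => hp ζ hζU (mem_roots'.1 hζ).2

lemma norm_eval_derivative_div_eval_le {p : ℂ[X]} {z : ℂ} {r : ℝ} (hr : 0 < r)
    (hz : p.eval z ≠ 0) (h : ∀ ζ ∈ p.roots, r ≤ ‖z - ζ‖) :
    ‖(derivative p).eval z / p.eval z‖ ≤ p.natDegree / r := by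
  rw [(IsAlgClosed.splits p).eval_derivative_div_eval_of_ne_zero hz]
  refine (norm_sum_one_div_sub_le hr h).trans ?_
  gcongr
  exact_mod_cast card_roots' p

end Polynomial

lemma norm_le_mul_norm_of_hasDerivAt {g g' : ℂ → ℂ} {U : Set ℂ} {B : ℝ} {z : ℂ}
    (hU : Convex ℝ U) (h0 : 0 ∈ U) (hg0 : g 0 = 0) (hg : ∀ w ∈ U, HasDerivAt g (g' w) w)
    (hB : ∀ w ∈ U, ‖g' w‖ ≤ B) (hz : z ∈ U) : ‖g z‖ ≤ B * ‖z‖ := by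
  simpa [hg0] using hU.norm_image_sub_le_of_norm_hasDerivWithin_le
    (fun w hw => (hg w hw).hasDerivWithinAt) hB h0 hz

lemma norm_pow_mul_le_of_forall_mem_sphere {u : ℂ → ℂ} {r C : ℝ} {K : ℕ} {z : ℂ} (hr : 0 < r)
    (hu : DifferentiableOn ℂ u (closedBall 0 r)) (hC : ∀ w ∈ sphere (0 : ℂ) r, ‖w ^ K * u w‖ ≤ C)
    (hz : z ∈ closedBall 0 r) : ‖z ^ K * u z‖ ≤ C * (‖z‖ / r) ^ K := by
  have hsphere : ∀ w ∈ frontier (ball (0 : ℂ) r), ‖u w‖ ≤ C / r ^ K := by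
    intro w hw
    rw [frontier_ball 0 hr.ne'] at hw
    have hw' : ‖w‖ = r := by simpa using hw
    rw [le_div_iff₀ (by positivity), ← hw', ← norm_pow, mul_comm, ← norm_mul]
    exact hC w hw
  have hu' : ‖u z‖ ≤ C / r ^ K :=
    norm_le_of_forall_mem_frontier_norm_le isBounded_ball
      (hu.diffContOnCl_ball (subset_refl _)) hsphere (by rwa [closure_ball 0 hr.ne'])
  rw [norm_mul, norm_pow, div_pow, mul_comm]
  calc ‖u z‖ * ‖z‖ ^ K ≤ C / r ^ K * ‖z‖ ^ K := by gcongr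
    _ = C * (‖z‖ ^ K / r ^ K) := by ring

lemma norm_taylor_term_le {g : ℂ → ℂ} {a z : ℂ} {R C : ℝ} (hR : 0 < R)
    (hg : DifferentiableOn ℂ g (closedBall a R)) (hC : ∀ w ∈ sphere a R, ‖g w‖ ≤ C) (k : ℕ) :
    ‖(k ! : ℂ)⁻¹ * iteratedDeriv k g a * (z - a) ^ k‖ ≤ C * (‖z - a‖ / R) ^ k := by
  have hcauchy := norm_iteratedDeriv_le_of_forall_mem_sphere_norm_le k hR
    (hg.diffContOnCl_ball (subset_refl _)) hC
  have hk : (0 : ℝ) < k ! := by positivity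
  rw [norm_mul, norm_mul, norm_inv, norm_natCast, norm_pow, div_pow]
  calc (k ! : ℝ)⁻¹ * ‖iteratedDeriv k g a‖ * ‖z - a‖ ^ k
      ≤ (k ! : ℝ)⁻¹ * (k ! * C / R ^ k) * ‖z - a‖ ^ k := by gcongr
    _ = C * (‖z - a‖ ^ k / R ^ k) := by field_simp

lemma nonneg_of_forall_mem_sphere_norm_le {g : ℂ → ℂ} {a : ℂ} {R C : ℝ} (hR : 0 ≤ R)
    (hC : ∀ w ∈ sphere a R, ‖g w‖ ≤ C) : 0 ≤ C := by
  obtain ⟨w, hw⟩ := (NormedSpace.sphere_nonempty (x := a)).2 hR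
  exact (norm_nonneg _).trans (hC w hw)

lemma norm_le_three_mul_sqrt_of_two_circles {g : ℂ → ℂ} {a z : ℂ} {ρ m M : ℝ} (hρ : 0 < ρ)
    (hg : DifferentiableOn ℂ g (closedBall a (8 * ρ))) (hm : ∀ w ∈ sphere a ρ, ‖g w‖ ≤ m)
    (hM : ∀ w ∈ sphere a (8 * ρ), ‖g w‖ ≤ M) (hz : z ∈ closedBall a (3 / 2 * ρ)) :
    ‖g z‖ ≤ 3 * √(m * M) := by
  set term : ℕ → ℂ := fun k => (k ! : ℂ)⁻¹ * iteratedDeriv k g a * (z - a) ^ k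
  have hr : ‖z - a‖ ≤ 3 / 2 * ρ := mem_closedBall_iff_norm.1 hz
  have htaylor : HasSum term (g z) := by
    have hterm_eq : (fun k : ℕ => (k ! : ℂ)⁻¹ • (z - a) ^ k • iteratedDeriv k g a) = term := by
      funext k
      simp only [term, smul_eq_mul]
      ring
    rw [← hterm_eq]
    exact hasSum_taylorSeries_on_ball (hg.mono ball_subset_closedBall)
      (mem_ball_iff_norm.2 (hr.trans_lt (by linarith)))
  have hmM : 0 ≤ m * M := mul_nonneg (nonneg_of_forall_mem_sphere_norm_le hρ.le hm)
    (nonneg_of_forall_mem_sphere_norm_le (by positivity) hM)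
  have hratio : ‖z - a‖ / ρ * (‖z - a‖ / (8 * ρ)) ≤ (3 / 5) ^ 2 := by
    rw [_root_.div_mul_div_comm, div_le_iff₀ (by positivity)]
    nlinarith [norm_nonneg (z - a)]
  -- Cauchy's estimates on both circles, combined by taking the geometric mean.
  have hterm : ∀ k, ‖term k‖ ≤ √(m * M) * (3 / 5) ^ k := by
    intro k
    have hsmall := norm_taylor_term_le (z := z) hρ
      (hg.mono (closedBall_subset_closedBall (by linarith))) hm k
    have hbig := norm_taylor_term_le (z := z) (by positivity) hg hM k
    have hsq : ‖term k‖ ^ 2 ≤ m * M * ((3 / 5) ^ k) ^ 2 :=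
      calc ‖term k‖ ^ 2 = ‖term k‖ * ‖term k‖ := sq _
        _ ≤ m * (‖z - a‖ / ρ) ^ k * (M * (‖z - a‖ / (8 * ρ)) ^ k) :=
          mul_le_mul hsmall hbig (norm_nonneg _) ((norm_nonneg _).trans hsmall)
        _ = m * M * (‖z - a‖ / ρ * (‖z - a‖ / (8 * ρ))) ^ k := by ring
        _ ≤ m * M * ((3 / 5) ^ k) ^ 2 := by
          rw [← pow_mul, mul_comm k, pow_mul]
          gcongr
    calc ‖term k‖ = √(‖term k‖ ^ 2) := (Real.sqrt_sq (norm_nonneg _)).symm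
      _ ≤ √(m * M * ((3 / 5) ^ k) ^ 2) := Real.sqrt_le_sqrt hsq
      _ = √(m * M) * (3 / 5) ^ k := by
        rw [Real.sqrt_mul hmM, Real.sqrt_sq (by positivity)]
  have hgeom : HasSum (fun k : ℕ => √(m * M) * (3 / 5 : ℝ) ^ k) (√(m * M) * (1 - 3 / 5)⁻¹) :=
    (hasSum_geometric_of_lt_one (by norm_num) (by norm_num)).mul_left _
  calc ‖g z‖ ≤ √(m * M) * (1 - 3 / 5)⁻¹ := htaylor.norm_le_of_bounded hgeom hterm
    _ ≤ 3 * √(m * M) := by nlinarith [Real.sqrt_nonneg (m * M)]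

lemma norm_le_of_chain {g : ℂ → ℂ} {V : Set ℂ} {a : ℕ → ℂ} {N : ℕ} {ρ M γ : ℝ} (hρ : 0 < ρ)
    (hγ : 0 ≤ γ) (hg : DifferentiableOn ℂ g V) (hgV : ∀ z ∈ V, ‖g z‖ ≤ M)
    (hV : ∀ j < N, closedBall (a j) (8 * ρ) ⊆ V) (ha : ∀ j < N, dist (a (j + 1)) (a j) ≤ ρ / 2)
    (h0 : ∀ z ∈ closedBall (a 0) ρ, ‖g z‖ ≤ 9 * M * γ) :
    ∀ j ≤ N, ∀ z ∈ closedBall (a j) ρ, ‖g z‖ ≤ 9 * M * γ ^ ((1 / 2 : ℝ) ^ j) := by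
  -- `9 M γ ^ s` is the form kept by `m ↦ 3 √(m M)`, which halves `s`.
  intro j
  induction j with
  | zero =>
    intro _ z hz
    simpa using h0 z hz
  | succ j ih =>
    intro hj z hz
    have hM : 0 ≤ M := (norm_nonneg _).trans (hgV _ (hV j hj (mem_closedBall_self (by positivity))))
    have hz' : z ∈ closedBall (a j) (3 / 2 * ρ) := by
      rw [mem_closedBall] at hz ⊢
      linarith [dist_triangle z (a (j + 1)) (a j), ha j hj]
    refine (norm_le_three_mul_sqrt_of_two_circles hρ (hg.mono (hV j hj))
      (fun w hw => ih (Nat.le_of_succ_le hj) w (sphere_subset_closedBall hw))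
      (fun w hw => hgV w (hV j hj (sphere_subset_closedBall hw))) hz').trans_eq ?_
    rw [show 9 * M * γ ^ ((1 / 2 : ℝ) ^ j) * M = (3 * M) ^ 2 * γ ^ ((1 / 2 : ℝ) ^ j) by ring,
      Real.sqrt_mul (by positivity), Real.sqrt_sq (by positivity), Real.sqrt_eq_rpow,
      ← Real.rpow_mul hγ, pow_succ]
    ring

lemma inv_four_pow_le_exp_neg (K : ℕ) : (4 : ℝ)⁻¹ ^ K ≤ Real.exp (-K) := by
  rw [show -(K : ℝ) = K * (-1) by ring, Real.exp_nat_mul]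
  gcongr
  rw [Real.exp_neg, inv_le_inv₀ (by norm_num) (Real.exp_pos 1)]
  linarith [Real.exp_one_lt_d9]

lemma norm_le_exp_neg_of_hasDerivAt_eq_pow_mul {g S u : ℂ → ℂ} {r B : ℝ} {K : ℕ} {z : ℂ}
    (hr : 0 < r) (hg0 : g 0 = 0) (hg : ∀ w ∈ closedBall (0 : ℂ) r, HasDerivAt g (S w) w)
    (hS : ∀ w ∈ sphere (0 : ℂ) r, ‖S w‖ ≤ B) (hu : DifferentiableOn ℂ u (closedBall 0 r))
    (hSu : ∀ w ∈ closedBall (0 : ℂ) r, S w = w ^ K * u w) (hz : z ∈ closedBall (0 : ℂ) (r / 4)) :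
    ‖g z‖ ≤ B * Real.exp (-K) * (r / 4) := by
  have hB : 0 ≤ B := nonneg_of_forall_mem_sphere_norm_le hr.le hS
  have hsub : closedBall (0 : ℂ) (r / 4) ⊆ closedBall 0 r :=
    closedBall_subset_closedBall (by linarith)
  have hS_small : ∀ w ∈ closedBall (0 : ℂ) (r / 4), ‖S w‖ ≤ B * Real.exp (-K) := by
    intro w hw
    rw [hSu w (hsub hw)]
    refine (norm_pow_mul_le_of_forall_mem_sphere (C := B) hr hu (fun v hv => ?_) (hsub hw)).trans ?_
    · rw [← hSu v (sphere_subset_closedBall hv)]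
      exact hS v hv
    · have hw' : ‖w‖ / r ≤ 4⁻¹ := by
        rw [div_le_iff₀ hr]
        linarith [mem_closedBall_zero_iff.1 hw]
      calc B * (‖w‖ / r) ^ K ≤ B * 4⁻¹ ^ K := by gcongr
        _ ≤ B * Real.exp (-K) := by gcongr; exact inv_four_pow_le_exp_neg K
  refine (norm_le_mul_norm_of_hasDerivAt (convex_closedBall 0 _)
    (mem_closedBall_self (by positivity)) hg0 (fun w hw => hg w (hsub hw)) hS_small hz).trans ?_
  gcongr
  exact mem_closedBall_zero_iff.1 hz

lemma norm_one_le_of_chain_segmentNhd {g : ℂ → ℂ} {δ M γ : ℝ} (hδ0 : 0 < δ) (hγ : 0 ≤ γ)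
    (hg : DifferentiableOn ℂ g (segmentNhd (3 * δ / 4)))
    (hgV : ∀ z ∈ segmentNhd (3 * δ / 4), ‖g z‖ ≤ M)
    (h0 : ∀ z ∈ closedBall (0 : ℂ) (δ / 16), ‖g z‖ ≤ 9 * M * γ) :
    ‖g 1‖ ≤ 9 * M * γ ^ ((1 / 2 : ℝ) ^ ⌈32 / δ⌉₊) := by
  set T := ⌈32 / δ⌉₊
  have hT : (0 : ℝ) < T := by simpa [T] using Nat.ceil_pos.2 (by positivity : 0 < 32 / δ)
  have hTδ : 1 / (T : ℝ) ≤ δ / 16 / 2 := by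
    have := Nat.le_ceil (32 / δ)
    rw [div_le_iff₀ hδ0] at this
    rw [div_le_iff₀ hT]
    nlinarith
  refine norm_le_of_chain (a := fun j => ((j / T : ℝ) : ℂ)) (N := T) (ρ := δ / 16)
    (by positivity) hγ hg hgV
    (fun j hj => closedBall_subset_segmentNhd (by linarith)
      ⟨by positivity, (div_le_one hT).2 (by exact_mod_cast hj.le)⟩)
    (fun j _ => ?_) (by simpa using h0) T le_rfl 1 ?_
  · rw [Complex.dist_eq, ← ofReal_sub, norm_real, Nat.cast_succ, ← sub_div, add_sub_cancel_left,
      Real.norm_of_nonneg (by positivity)]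
    exact hTδ
  · rw [div_self hT.ne', ofReal_one]
    exact mem_closedBall_self (by positivity)

theorem norm_one_le_of_hasDerivAt_eq_pow_mul {δ B : ℝ} {K : ℕ} {g S u : ℂ → ℂ} (hδ0 : 0 < δ)
    (hδ1 : δ < 1) (hg0 : g 0 = 0) (hg : ∀ z ∈ segmentNhd (3 * δ / 4), HasDerivAt g (S z) z)
    (hS : ∀ z ∈ segmentNhd (3 * δ / 4), ‖S z‖ ≤ B)
    (hu : DifferentiableOn ℂ u (closedBall 0 (δ / 4)))
    (hSu : ∀ z ∈ closedBall (0 : ℂ) (δ / 4), S z = z ^ K * u z) :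
    ‖g 1‖ ≤ 18 * B * Real.exp (-(K / 2 ^ ⌈32 / δ⌉₊)) := by
  have hI0 : (0 : ℝ) ∈ Icc (0 : ℝ) 1 := left_mem_Icc.2 zero_le_one
  have h0V : (0 : ℂ) ∈ segmentNhd (3 * δ / 4) := by
    simpa using ofReal_mem_segmentNhd (by positivity) hI0
  have hB : 0 ≤ B := (norm_nonneg _).trans (hS 0 h0V)
  have hball : closedBall (0 : ℂ) (δ / 4) ⊆ segmentNhd (3 * δ / 4) := by
    simpa using closedBall_subset_segmentNhd (r := 3 * δ / 4) (by linarith) hI0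
  have hgV : ∀ z ∈ segmentNhd (3 * δ / 4), ‖g z‖ ≤ 2 * B := fun z hz =>
    (norm_le_mul_norm_of_hasDerivAt convex_segmentNhd h0V hg0 hg hS hz).trans
      (by nlinarith [norm_le_of_mem_segmentNhd hz])
  have hg_small : ∀ z ∈ closedBall (0 : ℂ) (δ / 16),
      ‖g z‖ ≤ 9 * (2 * B) * (Real.exp (-K) / 9) := fun z hz =>
    (norm_le_exp_neg_of_hasDerivAt_eq_pow_mul (by positivity) hg0 (fun w hw => hg w (hball hw))
      (fun w hw => hS w (hball (sphere_subset_closedBall hw))) hu hSu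
      (by rwa [div_div, show (4 : ℝ) * 4 = 16 by norm_num])).trans
      (by nlinarith [mul_nonneg hB (Real.exp_pos (-K)).le])
  calc ‖g 1‖ ≤ 9 * (2 * B) * (Real.exp (-K) / 9) ^ ((1 / 2 : ℝ) ^ ⌈32 / δ⌉₊) :=
        norm_one_le_of_chain_segmentNhd hδ0 (by positivity)
          (fun z hz => (hg z hz).differentiableAt.differentiableWithinAt) hgV hg_small
    _ ≤ 9 * (2 * B) * Real.exp (-K) ^ ((1 / 2 : ℝ) ^ ⌈32 / δ⌉₊) := by
      gcongr
      linarith [Real.exp_pos (-K)]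
    _ = 18 * B * Real.exp (-(K / 2 ^ ⌈32 / δ⌉₊)) := by
      rw [← Real.exp_mul, neg_mul, one_div, inv_pow, ← div_eq_mul_inv]
      ring

lemma norm_eval_derivative_div_eval_le_of_mem_segmentNhd {δ : ℝ} {n : ℕ} {p : ℂ[X]} {z : ℂ}
    (hδ : 0 < δ) (hpd : p.natDegree ≤ n) (hp : ∀ w ∈ segmentNhd δ, p.eval w ≠ 0)
    (hz : z ∈ segmentNhd (3 * δ / 4)) :
    ‖(derivative p).eval z / p.eval z‖ ≤ 4 * n / δ := by
  have hroots : ∀ ζ ∈ p.roots, δ / 4 ≤ ‖z - ζ‖ := fun ζ hζ =>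
    le_norm_sub_of_mem_segmentNhd hz fun hζU =>
      hp ζ (by rwa [show δ / 4 + 3 * δ / 4 = δ by ring] at hζU) (mem_roots'.1 hζ).2
  refine (norm_eval_derivative_div_eval_le (by positivity)
    (hp z (segmentNhd_mono (by linarith) hz)) hroots).trans ?_
  rw [div_div_eq_mul_div, mul_comm]
  gcongr

theorem exists_exp_eq_eval_div_eval {δ : ℝ} {n K : ℕ} {p q : ℂ[X]} (hδ0 : 0 < δ) (hδ1 : δ < 1)
    (hpd : p.natDegree ≤ n) (hqd : q.natDegree ≤ n)
    (hp : ∀ z ∈ segmentNhd δ, p.eval z ≠ 0) (hq : ∀ z ∈ segmentNhd δ, q.eval z ≠ 0)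
    (hpq : ∀ k ≤ K, p.coeff k = q.coeff k) :
    ∃ w, exp w = p.eval 1 / q.eval 1 ∧
      ‖w‖ ≤ 144 * n / δ * Real.exp (-(K / 2 ^ ⌈32 / δ⌉₊)) := by
  set V := segmentNhd (3 * δ / 4)
  have hVδ : V ⊆ segmentNhd δ := segmentNhd_mono (by linarith)
  have h0V : (0 : ℂ) ∈ V := by
    simpa using ofReal_mem_segmentNhd (by positivity) (left_mem_Icc.2 zero_le_one)
  have h1V : (1 : ℂ) ∈ V := by
    simpa using ofReal_mem_segmentNhd (by positivity) (right_mem_Icc.2 zero_le_one)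
  have hball : closedBall (0 : ℂ) (δ / 4) ⊆ V := by
    simpa using closedBall_subset_segmentNhd (r := 3 * δ / 4) (by linarith)
      (left_mem_Icc.2 zero_le_one)
  have hV : StarConvex ℝ 0 V := convex_segmentNhd.starConvex h0V
  have hpV : ∀ z ∈ V, p.eval z ≠ 0 := fun z hz => hp z (hVδ hz)
  have hqV : ∀ z ∈ V, q.eval z ≠ 0 := fun z hz => hq z (hVδ hz)
  obtain ⟨h, hh⟩ := X_pow_dvd_derivative_mul_sub_mul hpq
  refine ⟨rootLog p.roots 1 - rootLog q.roots 1, ?_, ?_⟩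
  · have hpq0 : p.eval 0 = q.eval 0 := by simpa [coeff_zero_eq_eval_zero] using hpq 0 K.zero_le
    rw [eval_eq_eval_zero_mul_exp_rootLog hV hpV h1V, eval_eq_eval_zero_mul_exp_rootLog hV hqV h1V,
      hpq0, mul_div_mul_left _ _ (hqV 0 h0V), exp_sub]
  · refine (norm_one_le_of_hasDerivAt_eq_pow_mul (B := 8 * n / δ) hδ0 hδ1 (by simp)
      (fun z hz => (hasDerivAt_rootLog_roots hV hpV hz).sub (hasDerivAt_rootLog_roots hV hqV hz))
      (fun z hz => (norm_sub_le _ _).trans ?_)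
      (fun z hz => (h.differentiableAt.div (p.differentiableAt.mul q.differentiableAt)
        (mul_ne_zero (hpV z (hball hz)) (hqV z (hball hz)))).differentiableWithinAt)
      (fun z hz => eval_derivative_div_eval_sub_eq_pow_mul hh (hpV z (hball hz))
        (hqV z (hball hz)))).trans_eq
      (by ring)
    have h8 : 8 * (n : ℝ) / δ = 4 * n / δ + 4 * n / δ := by ring
    linarith [norm_eval_derivative_div_eval_le_of_mem_segmentNhd hδ0 hpd hp hz,
      norm_eval_derivative_div_eval_le_of_mem_segmentNhd hδ0 hqd hq hz]

lemma two_pow_ceil_le_exp {δ : ℝ} (hδ0 : 0 < δ) (hδ1 : δ ≤ 1) :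
    (2 : ℝ) ^ ⌈32 / δ⌉₊ ≤ Real.exp (33 / δ) :=
  calc (2 : ℝ) ^ ⌈32 / δ⌉₊ ≤ Real.exp 1 ^ ⌈32 / δ⌉₊ := by
        gcongr
        linarith [Real.add_one_le_exp 1]
    _ = Real.exp ⌈32 / δ⌉₊ := by rw [← Real.exp_nat_mul, mul_one]
    _ ≤ Real.exp (33 / δ) := by
        have hceil := Nat.ceil_lt_add_one (by positivity : 0 ≤ 32 / δ)
        have hδ : 1 ≤ 1 / δ := (one_le_div hδ0).2 hδ1
        have h33 : 33 / δ = 32 / δ + 1 / δ := by ring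
        exact Real.exp_le_exp.2 (by linarith)

lemma mul_exp_neg_div_two_pow_le {δ ε : ℝ} {n K : ℕ} (hδ0 : 0 < δ) (hδ1 : δ < 1) (hε0 : 0 < ε)
    (hε1 : ε < 1) (hn : 1 ≤ n)
    (hK : Real.exp (150 / δ) * Real.log (n * Real.exp (150 / δ) / ε) < K + 1) :
    144 * n / δ * Real.exp (-(K / 2 ^ ⌈32 / δ⌉₊)) ≤ ε := by
  set T := ⌈32 / δ⌉₊
  have hn' : (1 : ℝ) ≤ n := by exact_mod_cast hn
  set L := Real.log (n / ε)
  have hL : 0 ≤ L := Real.log_nonneg ((one_le_div hε0).2 (by linarith))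
  have hlogE : Real.log (n * Real.exp (150 / δ) / ε) = 150 / δ + L := by
    rw [mul_div_right_comm, Real.log_mul (by positivity) (Real.exp_pos _).ne', Real.log_exp]
    ring
  have hT : (2 : ℝ) ^ T ≤ Real.exp (33 / δ) := two_pow_ceil_le_exp hδ0 hδ1.le
  have hlog144 : 0 ≤ Real.log (144 / δ) := Real.log_nonneg ((one_le_div hδ0).2 (by linarith))
  have hKT : 2 ^ T * (Real.log (144 / δ) + L) ≤ K :=
    calc 2 ^ T * (Real.log (144 / δ) + L) ≤ Real.exp (33 / δ) * (144 / δ + L) := by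
          gcongr
          exact Real.log_le_self (by positivity)
      _ ≤ Real.exp (33 / δ) * (150 / δ + L) - 1 := by
          have hsplit : Real.exp (33 / δ) * (150 / δ + L)
              = Real.exp (33 / δ) * (144 / δ + L) + Real.exp (33 / δ) * (6 / δ) := by ring
          have h6 : 1 ≤ 6 / δ := (one_le_div hδ0).2 (by linarith)
          have h1 : 1 ≤ Real.exp (33 / δ) * (6 / δ) :=
            one_le_mul_of_one_le_of_one_le (Real.one_le_exp (by positivity)) h6
          linarith
      _ ≤ Real.exp (150 / δ) * (150 / δ + L) - 1 := by
          gcongr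
          linarith
      _ ≤ K := by
          rw [hlogE] at hK
          linarith
  have hexp : Real.exp (-(K / 2 ^ T)) ≤ δ / 144 * (ε / n) :=
    calc Real.exp (-(K / 2 ^ T)) ≤ Real.exp (-(Real.log (144 / δ) + L)) :=
          Real.exp_le_exp.2 (neg_le_neg ((le_div_iff₀ (by positivity)).2 (by linarith)))
      _ = δ / 144 * (ε / n) := by
          rw [Real.exp_neg, Real.exp_add, Real.exp_log (by positivity),
            Real.exp_log (by positivity)]
          field_simp
  calc 144 * n / δ * Real.exp (-(K / 2 ^ T)) ≤ 144 * n / δ * (δ / 144 * (ε / n)) := by gcongr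
    _ = ε := by field_simp

/-- Theorem 1.6 (two-polynomial form): if `p` and `q` are nonvanishing on the open
`δ`-neighborhood of the segment `[0,1] ⊆ ℂ` and agree on all coefficients of index
`k ≤ e^{c/δ}·ln(n·e^{c/δ}/ε)`, then `p(1)/q(1)` is `e^w` for some `w` with `|w| ≤ ε`. -/
theorem stmt5 :
    ∃ c : ℝ, 0 < c ∧
      ∀ (δ ε : ℝ) (n : ℕ) (p q : Polynomial ℂ),
        0 < δ → δ < 1 → 0 < ε → ε < 1 → 1 ≤ n →
        p.natDegree ≤ n → q.natDegree ≤ n →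
        (∀ z : ℂ, (∃ t : ℝ, t ∈ Set.Icc (0 : ℝ) 1 ∧ ‖z - t‖ < δ) →
          p.eval z ≠ 0) →
        (∀ z : ℂ, (∃ t : ℝ, t ∈ Set.Icc (0 : ℝ) 1 ∧ ‖z - t‖ < δ) →
          q.eval z ≠ 0) →
        (∀ k : ℕ, (k : ℝ) ≤ Real.exp (c / δ) * Real.log (n * Real.exp (c / δ) / ε) →
          p.coeff k = q.coeff k) →
        ∃ w : ℂ, Complex.exp w = p.eval 1 / q.eval 1 ∧ ‖w‖ ≤ ε := by
  refine ⟨150, by norm_num, fun δ ε n p q hδ0 hδ1 hε0 hε1 hn hpd hqd hp hq hcoeff => ?_⟩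
  set E := Real.exp (150 / δ) * Real.log (n * Real.exp (150 / δ) / ε)
  have hE : 0 ≤ E := by
    have hn' : (1 : ℝ) ≤ n := by exact_mod_cast hn
    refine mul_nonneg (Real.exp_pos _).le (Real.log_nonneg ((one_le_div hε0).2 ?_))
    nlinarith [Real.one_le_exp (by positivity : 0 ≤ 150 / δ)]
  obtain ⟨w, hw, hwK⟩ := exists_exp_eq_eval_div_eval (K := ⌊E⌋₊) hδ0 hδ1 hpd hqd
    (fun z hz => hp z (mem_segmentNhd.1 hz)) (fun z hz => hq z (mem_segmentNhd.1 hz))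
    (fun k hk => hcoeff k ((Nat.le_floor_iff hE).1 hk))
  exact ⟨w, hw, hwK.trans (mul_exp_neg_div_two_pow_le hδ0 hδ1 hε0 hε1 hn (Nat.lt_floor_add_one E))⟩
end

section
/- Let h₁ and h₂ be complex polynomials of degrees n₁ and n₂ respectively, let β > 1 be real, and suppose h₁(z) ≠ 0 and h₂(z) ≠ 0 whenever |z| < β. Let g(z) = h₁(z)/h₂(z), and let f be a branch of ln g on the disc {|z| < β}, i.e., f is holomorphic on {|z| < β} with e^{f(z)} = g(z) there. Let T_m(1) = f(0) + Σ_{k=1}^{m} f^{(k)}(0)/k! be the value at z = 1 of the degree-m Taylor polynomial of f at 0. Then |f(1) - T_m(1)| ≤ (n₁ + n₂)/(β^m (β - 1)(m + 1)). -/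
/-!
Since `exp ∘ f = h₁ / h₂`, the derivative `f'` is the logarithmic derivative
`∑ 1 / (z - α) - ∑ 1 / (z - γ)`, over the roots `α` of `h₁` and `γ` of `h₂`, all of modulus at
least `β`. Hence the `k`-th Taylor coefficient of `f` at `0` is `(∑ γ⁻ᵏ - ∑ α⁻ᵏ) / k`, of modulus
at most `(n₁ + n₂) / (k βᵏ)`, and summing these bounds over `k > m` against a geometric series
gives the estimate.
-/

open Polynomial Filter Topology

section InvSub

variable {𝕜 : Type*} [NontriviallyNormedField 𝕜]

theorem iteratedDeriv_inv_sub (k : ℕ) (α : 𝕜) :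
    iteratedDeriv k (fun w => (w - α)⁻¹) =
      fun w => (-1) ^ k * k.factorial * ((w - α) ^ (k + 1))⁻¹ := by
  rw [iteratedDeriv_eq_iterate]
  have := iter_deriv_inv_linear_sub k 1 α
  simp only [one_mul, one_pow, mul_one] at this
  rw [this]
  funext w
  rw [show (-1 - k : ℤ) = -((k + 1 : ℕ) : ℤ) by push_cast; ring, zpow_neg, zpow_natCast]

theorem contDiffAt_multiset_sum_inv_sub {s : Multiset 𝕜} {z : 𝕜} (hz : ∀ α ∈ s, z ≠ α)
    {n : WithTop ℕ∞} : ContDiffAt 𝕜 n (fun w => (s.map fun α => (w - α)⁻¹).sum) z := by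
  induction s using Multiset.induction_on with
  | empty => simpa using contDiffAt_const
  | cons a s ih =>
    simp only [Multiset.map_cons, Multiset.sum_cons]
    have ha : z - a ≠ 0 := sub_ne_zero.mpr (hz a (Multiset.mem_cons_self a s))
    exact ((contDiffAt_id.sub contDiffAt_const).inv ha).add
      (ih fun α hα => hz α (Multiset.mem_cons_of_mem hα))

theorem iteratedDeriv_multiset_sum_inv_sub {s : Multiset 𝕜} {z : 𝕜} (hz : ∀ α ∈ s, z ≠ α)
    (k : ℕ) : iteratedDeriv k (fun w => (s.map fun α => (w - α)⁻¹).sum) z =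
      (-1) ^ k * k.factorial * (s.map fun α => ((z - α) ^ (k + 1))⁻¹).sum := by
  induction s using Multiset.induction_on with
  | empty => simp
  | cons a s ih =>
    have hs : ∀ α ∈ s, z ≠ α := fun α hα => hz α (Multiset.mem_cons_of_mem hα)
    have ha : z - a ≠ 0 := sub_ne_zero.mpr (hz a (Multiset.mem_cons_self a s))
    simp only [Multiset.map_cons, Multiset.sum_cons]
    have hinv : ContDiffAt 𝕜 k (fun w => (w - a)⁻¹) z :=
      (contDiffAt_id.sub contDiffAt_const).inv ha
    rw [iteratedDeriv_fun_add hinv (contDiffAt_multiset_sum_inv_sub hs), iteratedDeriv_inv_sub,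
      ih hs, mul_add]

theorem norm_multiset_sum_inv_sub_pow_le {s : Multiset 𝕜} {z : 𝕜} {r : ℝ} (hr : 0 < r)
    (hs : ∀ α ∈ s, r ≤ ‖z - α‖) (k : ℕ) :
    ‖(s.map fun α => ((z - α) ^ k)⁻¹).sum‖ ≤ s.card / r ^ k := by
  refine (norm_multiset_sum_le _).trans ?_
  rw [Multiset.map_map, div_eq_mul_inv, ← nsmul_eq_mul, ← s.card_map (fun α => ‖((z - α) ^ k)⁻¹‖)]
  refine Multiset.sum_le_card_nsmul _ _ fun x hx => ?_
  obtain ⟨α, hα, rfl⟩ := Multiset.mem_map.mp hx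
  simp only [Function.comp_apply, norm_inv, norm_pow]
  exact inv_anti₀ (by positivity) (pow_le_pow_left₀ hr.le (hs α hα) k)

end InvSub

theorem Polynomial.Splits.logDeriv_eval {𝕜 : Type*} [NontriviallyNormedField 𝕜] {p : 𝕜[X]}
    (hp : p.Splits) {z : 𝕜} (hz : p.eval z ≠ 0) :
    logDeriv (fun w => p.eval w) z = (p.roots.map fun α => (z - α)⁻¹).sum := by
  simp only [logDeriv_apply, Polynomial.deriv, hp.eval_derivative_div_eval_of_ne_zero hz, one_div]

theorem deriv_eq_logDeriv_of_cexp_eventuallyEq {f g : ℂ → ℂ} {z : ℂ}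
    (hf : DifferentiableAt ℂ f z) (hfg : (fun w => Complex.exp (f w)) =ᶠ[𝓝 z] g) :
    deriv f z = logDeriv g z := by
  rw [← (logDeriv_congr_nhds hfg).eq_of_nhds, ← Function.comp_def,
    logDeriv_comp Complex.differentiableAt_exp hf, Complex.logDeriv_exp, Pi.one_apply, one_mul]

theorem deriv_eq_sum_roots_sub_sum_roots {f : ℂ → ℂ} {p q : ℂ[X]} {z : ℂ}
    (hf : DifferentiableAt ℂ f z)
    (hfg : (fun w => Complex.exp (f w)) =ᶠ[𝓝 z] fun w => p.eval w / q.eval w) :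
    deriv f z = (p.roots.map fun α => (z - α)⁻¹).sum - (q.roots.map fun α => (z - α)⁻¹).sum := by
  obtain ⟨hp, hq⟩ : p.eval z ≠ 0 ∧ q.eval z ≠ 0 :=
    div_ne_zero_iff.mp (hfg.eq_of_nhds ▸ Complex.exp_ne_zero (f z))
  rw [deriv_eq_logDeriv_of_cexp_eventuallyEq hf hfg,
    logDeriv_div z hp hq p.differentiableAt q.differentiableAt,
    (IsAlgClosed.splits p).logDeriv_eval hp, (IsAlgClosed.splits q).logDeriv_eval hq]

theorem Polynomial.le_norm_of_mem_roots {R : Type*} [NormedCommRing R] [IsDomain R] {p : R[X]}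
    {β : ℝ} (hp : ∀ z : R, ‖z‖ < β → p.eval z ≠ 0) {α : R} (hα : α ∈ p.roots) : β ≤ ‖α‖ :=
  not_lt.mp fun h => hp α h (mem_roots'.mp hα).2

theorem norm_iteratedDeriv_succ_div_factorial_le {f : ℂ → ℂ} {s₁ s₂ : Multiset ℂ} {z : ℂ}
    {r : ℝ} (hr : 0 < r) (hs₁ : ∀ α ∈ s₁, r ≤ ‖z - α‖) (hs₂ : ∀ α ∈ s₂, r ≤ ‖z - α‖)
    (hf : deriv f =ᶠ[𝓝 z]
      fun w => (s₁.map fun α => (w - α)⁻¹).sum - (s₂.map fun α => (w - α)⁻¹).sum)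
    (k : ℕ) :
    ‖iteratedDeriv (k + 1) f z / ((k + 1).factorial : ℂ)‖ ≤
      (s₁.card + s₂.card) / ((k + 1) * r ^ (k + 1)) := by
  have hne : ∀ s : Multiset ℂ, (∀ α ∈ s, r ≤ ‖z - α‖) → ∀ α ∈ s, z ≠ α := fun s hs α hα h => by
    simpa [h] using hr.trans_le (hs α hα)
  have hfact : ∀ x : ℂ, (-1) ^ k * k.factorial * x / ((k + 1).factorial : ℂ) =
      (-1) ^ k / (k + 1) * x := fun x => by
    have : (k.factorial : ℂ) ≠ 0 := Nat.cast_ne_zero.mpr k.factorial_ne_zero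
    rw [Nat.factorial_succ]
    push_cast
    field_simp
  set P : Multiset ℂ → ℂ := fun s => (s.map fun α => ((z - α) ^ (k + 1))⁻¹).sum
  have hcoeff : iteratedDeriv (k + 1) f z / ((k + 1).factorial : ℂ) =
      (-1) ^ k / (k + 1) * (P s₁ - P s₂) := by
    rw [iteratedDeriv_succ', hf.iteratedDeriv_eq, iteratedDeriv_fun_sub
      (contDiffAt_multiset_sum_inv_sub (hne s₁ hs₁)) (contDiffAt_multiset_sum_inv_sub (hne s₂ hs₂)),
      iteratedDeriv_multiset_sum_inv_sub (hne s₁ hs₁),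
      iteratedDeriv_multiset_sum_inv_sub (hne s₂ hs₂), ← mul_sub, hfact]
  have hP : ‖P s₁ - P s₂‖ ≤ s₁.card / r ^ (k + 1) + s₂.card / r ^ (k + 1) :=
    (norm_sub_le _ _).trans (add_le_add (norm_multiset_sum_inv_sub_pow_le hr hs₁ _)
      (norm_multiset_sum_inv_sub_pow_le hr hs₂ _))
  rw [hcoeff, norm_mul, norm_div, norm_pow, norm_neg, norm_one, one_pow]
  calc 1 / ‖(k : ℂ) + 1‖ * ‖P s₁ - P s₂‖
      ≤ 1 / (k + 1) * (s₁.card / r ^ (k + 1) + s₂.card / r ^ (k + 1)) := by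
        rw [show ‖(k : ℂ) + 1‖ = k + 1 by norm_cast]
        gcongr
    _ = (s₁.card + s₂.card) / ((k + 1) * r ^ (k + 1)) := by field_simp

theorem norm_tsum_nat_add_le {E : Type*} [SeminormedAddCommGroup E] {c : ℕ → E} {C β : ℝ}
    (hC : 0 ≤ C) (hβ : 1 < β) (hc : ∀ k : ℕ, ‖c (k + 1)‖ ≤ C / ((k + 1) * β ^ (k + 1)))
    (m : ℕ) : ‖∑' i, c (i + (m + 1))‖ ≤ C / (β ^ m * (β - 1) * (m + 1)) := by
  have hβ0 : 0 < β := one_pos.trans hβ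
  have hq : HasSum (fun i : ℕ => C / ((m + 1) * β ^ (m + 1)) * β⁻¹ ^ i)
      (C / ((m + 1) * β ^ (m + 1)) * (1 - β⁻¹)⁻¹) :=
    (hasSum_geometric_of_lt_one (by positivity) (inv_lt_one_of_one_lt₀ hβ)).mul_left _
  refine (tsum_of_norm_bounded hq fun i => (hc (i + m)).trans ?_).trans_eq ?_
  · rw [inv_pow, ← div_eq_mul_inv, div_div, mul_assoc, ← pow_add, Nat.cast_add]
    refine div_le_div_of_nonneg_left hC (by positivity) ?_
    rw [show m + 1 + i = i + m + 1 by ring]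
    gcongr
    linarith [(i.cast_nonneg : (0 : ℝ) ≤ i)]
  · field_simp
    ring

theorem norm_sub_taylor_one_le {f : ℂ → ℂ} {C β : ℝ} (hC : 0 ≤ C) (hβ : 1 < β)
    (hf : DifferentiableOn ℂ f (Metric.ball 0 β))
    (hcoeff : ∀ k : ℕ,
      ‖iteratedDeriv (k + 1) f 0 / ((k + 1).factorial : ℂ)‖ ≤ C / ((k + 1) * β ^ (k + 1)))
    (m : ℕ) :
    ‖f 1 - (f 0 + ∑ k ∈ Finset.Icc 1 m, iteratedDeriv k f 0 / (k.factorial : ℂ))‖ ≤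
      C / (β ^ m * (β - 1) * (m + 1)) := by
  set c : ℕ → ℂ := fun k => iteratedDeriv k f 0 / (k.factorial : ℂ)
  have hsum : HasSum c (f 1) := by
    simpa [c, div_eq_inv_mul] using
      Complex.hasSum_taylorSeries_on_ball hf (by simpa using hβ : (1 : ℂ) ∈ Metric.ball 0 β)
  have hpoly : f 0 + ∑ k ∈ Finset.Icc 1 m, c k = ∑ k ∈ Finset.range (m + 1), c k := by
    rw [Finset.range_eq_Ico, Finset.sum_eq_sum_Ico_succ_bot m.succ_pos, zero_add,
      Nat.succ_eq_add_one, Finset.Ico_add_one_right_eq_Icc]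
    simp [c]
  rw [hpoly, ← hsum.tsum_eq, ← hsum.summable.sum_add_tsum_nat_add (m + 1), add_sub_cancel_left]
  exact norm_tsum_nat_add_le hC hβ hcoeff m

theorem stmt6_general (h₁ h₂ : Polynomial ℂ) (n₁ n₂ : ℕ)
    (hn₁ : h₁.natDegree = n₁) (hn₂ : h₂.natDegree = n₂)
    (β : ℝ) (hβ : 1 < β)
    (f : ℂ → ℂ) (hf : DifferentiableOn ℂ f (Metric.ball (0 : ℂ) β))
    (hfg : ∀ z : ℂ, ‖z‖ < β → Complex.exp (f z) = h₁.eval z / h₂.eval z)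
    (m : ℕ) :
    ‖f 1 - (f 0 + ∑ k ∈ Finset.Icc 1 m, iteratedDeriv k f 0 / (k.factorial : ℂ))‖
      ≤ (n₁ + n₂ : ℝ) / (β ^ m * (β - 1) * (m + 1)) := by
  have hβ0 : 0 < β := one_pos.trans hβ
  -- `exp` does not vanish and `x / 0 = 0`, so neither polynomial vanishes on the disc.
  have heval (z : ℂ) (hz : ‖z‖ < β) : h₁.eval z ≠ 0 ∧ h₂.eval z ≠ 0 :=
    div_ne_zero_iff.mp (hfg z hz ▸ Complex.exp_ne_zero (f z))
  have hroots₁ (α : ℂ) (hα : α ∈ h₁.roots) : β ≤ ‖0 - α‖ := by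
    simpa using le_norm_of_mem_roots (fun z hz => (heval z hz).1) hα
  have hroots₂ (α : ℂ) (hα : α ∈ h₂.roots) : β ≤ ‖0 - α‖ := by
    simpa using le_norm_of_mem_roots (fun z hz => (heval z hz).2) hα
  have hderiv : deriv f =ᶠ[𝓝 0] fun w =>
      (h₁.roots.map fun α => (w - α)⁻¹).sum - (h₂.roots.map fun α => (w - α)⁻¹).sum := by
    filter_upwards [Metric.ball_mem_nhds 0 hβ0] with w hw
    have hw_nhds := Metric.isOpen_ball.mem_nhds hw
    refine deriv_eq_sum_roots_sub_sum_roots (hf.differentiableAt hw_nhds) ?_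
    filter_upwards [hw_nhds] with v hv
    exact hfg v (mem_ball_zero_iff.mp hv)
  refine norm_sub_taylor_one_le (by positivity) hβ hf (fun k => ?_) m
  simpa [IsAlgClosed.card_roots_eq_natDegree, hn₁, hn₂] using
    norm_iteratedDeriv_succ_div_factorial_le hβ0 hroots₁ hroots₂ hderiv k

/-- Lemma 2.1: if `g = h₁/h₂` has neither zeros nor poles on the disc `{|z| < β}` with
`β > 1`, and `f` is a holomorphic branch of `ln g` there, then the value at `1` of the
degree-`m` Taylor polynomial of `f` at `0` approximates `f(1)` within
`(n₁+n₂)/(β^m (β-1)(m+1))`. -/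
theorem stmt6 (h₁ h₂ : Polynomial ℂ) (n₁ n₂ : ℕ)
    (hn₁ : h₁.natDegree = n₁) (hn₂ : h₂.natDegree = n₂)
    (β : ℝ) (hβ : 1 < β)
    (hz₁ : ∀ z : ℂ, ‖z‖ < β → h₁.eval z ≠ 0)
    (hz₂ : ∀ z : ℂ, ‖z‖ < β → h₂.eval z ≠ 0)
    (f : ℂ → ℂ) (hf : DifferentiableOn ℂ f (Metric.ball (0 : ℂ) β))
    (hfg : ∀ z : ℂ, ‖z‖ < β → Complex.exp (f z) = h₁.eval z / h₂.eval z)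
    (m : ℕ) :
    ‖f 1 - (f 0 + ∑ k ∈ Finset.Icc 1 m, iteratedDeriv k f 0 / (k.factorial : ℂ))‖
      ≤ (n₁ + n₂ : ℝ) / (β ^ m * (β - 1) * (m + 1)) :=
  stmt6_general h₁ h₂ n₁ n₂ hn₁ hn₂ β hβ f hf hfg m
end

section
/- Let 0 < ρ < 1 be real, let ξ = 1 - √(ρ/(1+ρ)), let β = ξ^{-1}, and define ψ(z) = ρ/(1 - ξz)² - ρ. Then: (i) β ≥ 1 + √ρ; (ii) ψ(0) = 0 and ψ(1) = 1; and (iii) for every z ∈ ℂ with |z| < β, the value ψ(z) does not lie on the ray {w ∈ ℂ : Im w = 0 and Re w ≤ -3ρ/4}; that is, if ψ(z) is real then ψ(z) > -3ρ/4. -/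
/-!
The map `z ↦ u = 1 - ξz` sends the disc `|z| < β = ξ⁻¹` into the disc `|u - 1| < 1`, on which
`Re u > 0`. Since `Im (u²) = 2 Re u Im u`, `ψ(z) = ρ/u² - ρ` can be real only when `u` is real,
and then `u ∈ (0, 2)` gives `ψ(z) > ρ/4 - ρ = -3ρ/4`.
-/

namespace Real

lemma sqrt_div_one_add_lt_one {ρ : ℝ} (hρ : 0 ≤ ρ) : √(ρ / (1 + ρ)) < 1 := by
  rw [sqrt_lt' one_pos, one_pow, div_lt_one (by linarith)]
  linarith

lemma sqrt_div_one_add_sqrt_le {ρ : ℝ} (hρ : 0 ≤ ρ) : √ρ / (1 + √ρ) ≤ √(ρ / (1 + ρ)) := by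
  have hle : 1 + ρ ≤ (1 + √ρ) ^ 2 := by nlinarith [sq_sqrt hρ, sqrt_nonneg ρ]
  calc √ρ / (1 + √ρ) = √(ρ / (1 + √ρ) ^ 2) := by
        rw [sqrt_div hρ, sqrt_sq (by positivity)]
    _ ≤ √(ρ / (1 + ρ)) := sqrt_le_sqrt (div_le_div_of_nonneg_left hρ (by linarith) hle)

lemma one_add_sqrt_le_inv_one_sub_sqrt_div {ρ : ℝ} (hρ : 0 ≤ ρ) :
    1 + √ρ ≤ (1 - √(ρ / (1 + ρ)))⁻¹ := by
  have hsqrt := sqrt_div_one_add_sqrt_le hρ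
  rw [div_le_iff₀ (by positivity)] at hsqrt
  rw [le_inv_comm₀ (by positivity) (sub_pos.2 (sqrt_div_one_add_lt_one hρ)), inv_eq_one_div,
    le_div_iff₀ (by positivity)]
  linarith

lemma div_sq_sqrt_div_one_add_sub_self {ρ : ℝ} (hρ : 0 < ρ) :
    ρ / √(ρ / (1 + ρ)) ^ 2 - ρ = 1 := by
  rw [sq_sqrt (by positivity)]
  field_simp
  ring

end Real

namespace Complex

lemma im_eq_zero_of_im_sq_eq_zero {w : ℂ} (hw : 0 < w.re) (h : (w ^ 2).im = 0) : w.im = 0 := by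
  rw [sq, mul_im] at h
  have : 2 * w.re * w.im = 0 := by linarith
  simpa [hw.ne'] using this

lemma im_eq_zero_of_im_ofReal_div_eq_zero {c : ℝ} (hc : c ≠ 0) {v : ℂ}
    (h : ((c : ℂ) / v).im = 0) : v.im = 0 := by
  rcases eq_or_ne v 0 with rfl | hv
  · rfl
  rw [div_im, ofReal_im, ofReal_re, zero_mul, zero_div, zero_sub, neg_eq_zero,
    div_eq_zero_iff] at h
  simpa [hc, normSq_eq_zero, hv] using h

lemma lt_re_ofReal_div_sq {c : ℝ} (hc : 0 < c) {u : ℂ} (hu : ‖u - 1‖ < 1)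
    (h : ((c : ℂ) / u ^ 2).im = 0) : c / 4 < ((c : ℂ) / u ^ 2).re := by
  have hre := (abs_re_le_norm (u - 1)).trans_lt hu
  rw [sub_re, one_re, abs_lt] at hre
  have hre0 : 0 < u.re := by linarith
  have him : u.im = 0 :=
    im_eq_zero_of_im_sq_eq_zero hre0 (im_eq_zero_of_im_ofReal_div_eq_zero hc.ne' h)
  have hu_real : u = (u.re : ℂ) := ext rfl (by simp [him])
  rw [hu_real, ← ofReal_pow, ← ofReal_div, ofReal_re]
  exact div_lt_div_of_pos_left hc (by positivity) (by nlinarith)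

end Complex

theorem stmt8_general (ρ : ℝ) (hρ0 : 0 < ρ)
    (ξ : ℝ) (hξ : ξ = 1 - Real.sqrt (ρ / (1 + ρ)))
    (β : ℝ) (hβ : β = ξ⁻¹)
    (ψ : ℂ → ℂ) (hψ : ∀ z : ℂ, ψ z = (ρ : ℂ) / (1 - (ξ : ℂ) * z) ^ 2 - (ρ : ℂ)) :
    1 + Real.sqrt ρ ≤ β ∧ ψ 0 = 0 ∧ ψ 1 = 1 ∧
      ∀ z : ℂ, ‖z‖ < β → (ψ z).im = 0 → -3 * ρ / 4 < (ψ z).re := by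
  have hξ0 : 0 < ξ := hξ ▸ sub_pos.2 (Real.sqrt_div_one_add_lt_one hρ0.le)
  refine ⟨hβ ▸ hξ ▸ Real.one_add_sqrt_le_inv_one_sub_sqrt_div hρ0.le, by simp [hψ], ?_, ?_⟩
  · rw [hψ, hξ, mul_one, ← Complex.ofReal_one, ← Complex.ofReal_sub, sub_sub_cancel]
    exact_mod_cast Real.div_sq_sqrt_div_one_add_sub_self hρ0
  · intro z hz him
    have hu : ‖(1 - (ξ : ℂ) * z) - 1‖ < 1 := by
      rw [sub_sub_cancel_left, norm_neg, norm_mul, Complex.norm_real, Real.norm_of_nonneg hξ0.le]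
      calc ξ * ‖z‖ < ξ * ξ⁻¹ := mul_lt_mul_of_pos_left (hβ ▸ hz) hξ0
        _ = 1 := mul_inv_cancel₀ hξ0.ne'
    rw [hψ, Complex.sub_im, Complex.ofReal_im, sub_zero] at him
    have := Complex.lt_re_ofReal_div_sq hρ0 hu him
    rw [hψ, Complex.sub_re, Complex.ofReal_re]
    linarith

/-- Lemma 2.4: for `0 < ρ < 1`, `ξ = 1 - √(ρ/(1+ρ))`, `β = ξ⁻¹` and
`ψ(z) = ρ/(1-ξz)² - ρ`, one has `β ≥ 1 + √ρ`, `ψ(0) = 0`, `ψ(1) = 1`, and the image of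
the disc `{|z| < β}` under `ψ` avoids the ray `{Im w = 0, Re w ≤ -3ρ/4}`. -/
theorem stmt8 (ρ : ℝ) (hρ0 : 0 < ρ) (hρ1 : ρ < 1)
    (ξ : ℝ) (hξ : ξ = 1 - Real.sqrt (ρ / (1 + ρ)))
    (β : ℝ) (hβ : β = ξ⁻¹)
    (ψ : ℂ → ℂ) (hψ : ∀ z : ℂ, ψ z = (ρ : ℂ) / (1 - (ξ : ℂ) * z) ^ 2 - (ρ : ℂ)) :
    1 + Real.sqrt ρ ≤ β ∧ ψ 0 = 0 ∧ ψ 1 = 1 ∧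
      ∀ z : ℂ, ‖z‖ < β → (ψ z).im = 0 → -3 * ρ / 4 < (ψ z).re :=
  stmt8_general ρ hρ0 ξ hξ β hβ ψ hψ
end

section
/- Let 0 < δ < 1, set ρ = 4δ/3, ξ = 1 - √(ρ/(1+ρ)), β = ξ^{-1}, and ψ(z) = ρ/(1 - ξz)² - ρ. Let p be a nonzero real polynomial all of whose complex roots x are real and satisfy x ≤ -δ. Then the composition g(z) = p(ψ(z)) satisfies g(z) ≠ 0 for every z ∈ ℂ with |z| < β, g(0) = p(0), and g(1) = p(1). -/
/-!
Put `u = 1 - ξz`. For `‖z‖ < β = ξ⁻¹` we have `‖1 - u‖ < 1`, so `0 < Re u` and `‖u‖ < 2`; hence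
`u²` lies in the slit plane and in the disc of radius `4`. So `ψ(z) = ρ/u² - ρ` can only be real
if it exceeds `ρ/4 - ρ = -3ρ/4 = -δ`, and `ψ(z)` is never a root of `p`. The constant `ξ` is
chosen so that `(1 - ξ)² = ρ/(1+ρ)`, which makes `ψ(1) = 1`; clearly `ψ(0) = 0`.
-/

open Complex

lemma Complex.sq_mem_slitPlane_of_re_pos {u : ℂ} (hu : 0 < u.re) : u ^ 2 ∈ slitPlane := by
  rw [mem_slitPlane_iff, sq, mul_re, mul_im]
  rcases eq_or_ne u.im 0 with him | him
  · left; rw [him]; nlinarith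
  · right; rw [mul_comm u.im, ← two_mul, ← mul_assoc]; exact mul_ne_zero (by positivity) him

lemma Complex.inv_mem_slitPlane {z : ℂ} (hz : z ∈ slitPlane) : z⁻¹ ∈ slitPlane := by
  have hnorm : 0 < normSq z := normSq_pos.2 (slitPlane_ne_zero hz)
  rw [mem_slitPlane_iff, inv_re, inv_im] at *
  rcases hz with hre | him
  · exact Or.inl (div_pos hre hnorm)
  · exact Or.inr (div_ne_zero (neg_ne_zero.2 him) hnorm.ne')

lemma Complex.one_fourth_lt_of_inv_sq_eq_ofReal {u : ℂ} (hu : ‖1 - u‖ < 1) {t : ℝ}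
    (ht : (u ^ 2)⁻¹ = t) : 1 / 4 < t := by
  have hre : 0 < u.re := by
    have := abs_re_le_norm (1 - u)
    rw [sub_re, one_re] at this
    linarith [le_abs_self (1 - u.re)]
  have hnorm : ‖u‖ < 2 := by
    calc ‖u‖ = ‖1 - (1 - u)‖ := by rw [sub_sub_cancel]
      _ ≤ ‖(1 : ℂ)‖ + ‖1 - u‖ := norm_sub_le _ _
      _ < 2 := by rw [norm_one]; linarith
  have htpos : 0 < t := by
    rw [← ofReal_mem_slitPlane, ← ht]
    exact inv_mem_slitPlane (sq_mem_slitPlane_of_re_pos hre)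
  have hu0 : u ≠ 0 := fun h ↦ by simp [h] at hre
  have htnorm : t * ‖u‖ ^ 2 = 1 := by
    have := congrArg norm ht
    rw [norm_inv, norm_pow, norm_real, Real.norm_of_nonneg htpos.le] at this
    rw [← this, inv_mul_cancel₀ (by positivity)]
  nlinarith [norm_nonneg u]

lemma Complex.neg_three_mul_div_four_lt_of_div_sq_sub_eq_ofReal {ρ : ℝ} (hρ : 0 < ρ) {u : ℂ}
    (hu : ‖1 - u‖ < 1) {w : ℝ} (hw : (ρ : ℂ) / u ^ 2 - ρ = w) : -(3 * ρ / 4) < w := by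
  have hρ' : (ρ : ℂ) ≠ 0 := ofReal_ne_zero.2 hρ.ne'
  have ht : (u ^ 2)⁻¹ = ((w + ρ) / ρ : ℝ) := by
    push_cast
    rw [← hw]
    field_simp
    ring
  have := one_fourth_lt_of_inv_sq_eq_ofReal hu ht
  rw [lt_div_iff₀ hρ] at this
  linarith

lemma Real.sqrt_div_one_add_lt_one_s12 {ρ : ℝ} (hρ : 0 ≤ ρ) : √(ρ / (1 + ρ)) < 1 := by
  rw [Real.sqrt_lt' one_pos, one_pow, div_lt_one (by linarith)]
  linarith

lemma Real.div_sq_sqrt_div_one_add_sub_self_s12 {ρ : ℝ} (hρ : 0 < ρ) :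
    ρ / √(ρ / (1 + ρ)) ^ 2 - ρ = 1 := by
  rw [Real.sq_sqrt (by positivity)]
  field_simp
  ring

theorem stmt12_general (δ : ℝ) (hδ0 : 0 < δ)
    (ρ : ℝ) (hρ : ρ = 4 * δ / 3)
    (ξ : ℝ) (hξ : ξ = 1 - Real.sqrt (ρ / (1 + ρ)))
    (β : ℝ) (hβ : β = ξ⁻¹)
    (ψ : ℂ → ℂ) (hψ : ∀ z : ℂ, ψ z = (ρ : ℂ) / (1 - (ξ : ℂ) * z) ^ 2 - (ρ : ℂ))
    (p : Polynomial ℝ)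
    (hroots : ∀ z : ℂ, Polynomial.aeval z p = 0 → z.im = 0 ∧ z.re ≤ -δ)
    (g : ℂ → ℂ) (hg : ∀ z : ℂ, g z = Polynomial.aeval (ψ z) p) :
    (∀ z : ℂ, ‖z‖ < β → g z ≠ 0) ∧
      g 0 = Complex.ofReal (p.eval 0) ∧ g 1 = Complex.ofReal (p.eval 1) := by
  have hρ0 : 0 < ρ := by linarith
  have hξ0 : 0 < ξ := by linarith [Real.sqrt_div_one_add_lt_one_s12 hρ0.le]
  have hg_fix : ∀ x : ℝ, ψ x = x → g x = p.eval x := fun x hx ↦ by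
    rw [hg, hx]
    exact Polynomial.aeval_ofReal p x
  refine ⟨fun z hz hgz ↦ ?_, hg_fix 0 (by simp [hψ]), hg_fix 1 ?_⟩
  · obtain ⟨him, hre⟩ := hroots (ψ z) (hg z ▸ hgz)
    have hu : ‖1 - (1 - (ξ : ℂ) * z)‖ < 1 := by
      rw [sub_sub_cancel, norm_mul, norm_real, Real.norm_of_nonneg hξ0.le,
        ← mul_inv_cancel₀ hξ0.ne', ← hβ]
      exact mul_lt_mul_of_pos_left hz hξ0
    have hψz : (ρ : ℂ) / (1 - ξ * z) ^ 2 - ρ = (ψ z).re := by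
      rw [← hψ, ← re_add_im (ψ z), him]
      simp
    linarith [neg_three_mul_div_four_lt_of_div_sq_sub_eq_ofReal hρ0 hu hψz]
  · rw [hψ, hξ]
    push_cast
    rw [mul_one, sub_sub_cancel]
    exact_mod_cast Real.div_sq_sqrt_div_one_add_sub_self_s12 hρ0

/-- Section 2.5: with `ρ = 4δ/3`, `ξ = 1 - √(ρ/(1+ρ))`, `β = ξ⁻¹` and
`ψ(z) = ρ/(1-ξz)² - ρ`, if `p` is a nonzero real polynomial all of whose complex roots are
real and `≤ -δ`, then `g(z) = p(ψ(z))` is nonvanishing on the disc `{|z| < β}` and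
satisfies `g(0) = p(0)`, `g(1) = p(1)`. -/
theorem stmt12 (δ : ℝ) (hδ0 : 0 < δ) (hδ1 : δ < 1)
    (ρ : ℝ) (hρ : ρ = 4 * δ / 3)
    (ξ : ℝ) (hξ : ξ = 1 - Real.sqrt (ρ / (1 + ρ)))
    (β : ℝ) (hβ : β = ξ⁻¹)
    (ψ : ℂ → ℂ) (hψ : ∀ z : ℂ, ψ z = (ρ : ℂ) / (1 - (ξ : ℂ) * z) ^ 2 - (ρ : ℂ))
    (p : Polynomial ℝ) (hp : p ≠ 0)
    (hroots : ∀ z : ℂ, Polynomial.aeval z p = 0 → z.im = 0 ∧ z.re ≤ -δ)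
    (g : ℂ → ℂ) (hg : ∀ z : ℂ, g z = Polynomial.aeval (ψ z) p) :
    (∀ z : ℂ, ‖z‖ < β → g z ≠ 0) ∧
      g 0 = Complex.ofReal (p.eval 0) ∧ g 1 = Complex.ofReal (p.eval 1) :=
  stmt12_general δ hδ0 ρ hρ ξ hξ β hβ ψ hψ p hroots g hg
end
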